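/- arXiv:1711.07524 — 9 statements merged into one kernel-verified Lean document; each statement's English description precedes it below -/
import Mathlib

section
/- Let n ≥ 2. The maximum number of Hamiltonian paths of the complete graph K_n such that the union of every two distinct paths in the family contains a cycle of odd length equals the number of balanced bipartitions of the vertex set; that is, this maximum equals binom(n, (n−1)/2) when n is odd, and equals (1/2)·binom(n, n/2) when n is even. -/
open SimpleGraph

/-- `G` is (the edge graph of) a Hamiltonian path of the complete graph on `Fin n`:
it is the image of the path graph under a relabelling of the vertices. -/
def IsHamPathGraph {n : ℕ} (G : SimpleGraph (Fin n)) : Prop :=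
  ∃ σ : Fin n ≃ Fin n, G = (pathGraph n).map σ.toEmbedding

/-!
A Hamiltonian path is a connected bipartite graph, so it has exactly one bipartition, and
that bipartition is balanced. If `G` is connected with bipartition `{A, Aᶜ}`, then `G ⊔ H`
contains an odd cycle exactly when `{A, Aᶜ}` is not a bipartition of `H`: an edge of `H`
inside one side closes an even path of `G` into an odd cycle. Hence two Hamiltonian paths
are separated by an odd cycle iff their bipartitions differ, so a separated family injects
into the balanced bipartitions, and conversely every balanced bipartition is realised by a
Hamiltonian path.
-/

open Finset

namespace SimpleGraph

variable {V : Type*} {G H : SimpleGraph V} {s t : Set V}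

def HasOddCycle (G : SimpleGraph V) : Prop :=
  ∃ (v : V) (c : G.Walk v v), c.IsCycle ∧ Odd c.length

theorem isBipartiteWith_compl_iff :
    G.IsBipartiteWith s sᶜ ↔ ∀ ⦃v w⦄, G.Adj v w → (v ∈ s ↔ w ∉ s) := by
  refine ⟨fun h v w hvw => ?_, fun h => ⟨disjoint_compl_right, fun v w hvw => ?_⟩⟩
  · rcases h.mem_of_adj hvw with ⟨hv, hw⟩ | ⟨hv, hw⟩ <;> simp_all
  · have := h hvw
    rw [Set.mem_compl_iff, Set.mem_compl_iff]
    tauto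

theorem IsBipartiteWith.sup (hG : G.IsBipartiteWith s t) (hH : H.IsBipartiteWith s t) :
    (G ⊔ H).IsBipartiteWith s t :=
  ⟨hG.disjoint, fun _ _ hvw => hvw.elim (hG.mem_of_adj ·) (hH.mem_of_adj ·)⟩

theorem IsBipartiteWith.even_length_iff (h : G.IsBipartiteWith s sᶜ) {u v : V}
    (p : G.Walk u v) : Even p.length ↔ (u ∈ s ↔ v ∈ s) := by
  induction p with
  | nil => simp
  | cons hadj p ih =>
    rw [Walk.length_cons, Nat.even_add_one, ih, isBipartiteWith_compl_iff.mp h hadj]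
    tauto

theorem IsBipartiteWith.not_hasOddCycle (h : G.IsBipartiteWith s sᶜ) : ¬ G.HasOddCycle := by
  rintro ⟨v, c, -, hodd⟩
  exact Nat.not_even_iff_odd.mpr hodd ((h.even_length_iff c).mpr Iff.rfl)

theorem IsBipartiteWith.eq_or_eq_compl_of_connected (hG : G.Connected)
    (hs : G.IsBipartiteWith s sᶜ) (ht : G.IsBipartiteWith t tᶜ) : s = t ∨ s = tᶜ := by
  obtain ⟨v₀⟩ := hG.nonempty
  have parity (v : V) : (v₀ ∈ s ↔ v ∈ s) ↔ (v₀ ∈ t ↔ v ∈ t) := by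
    obtain ⟨p⟩ := hG.preconnected v₀ v
    rw [← hs.even_length_iff p, ← ht.even_length_iff p]
  by_cases h₀ : v₀ ∈ s ↔ v₀ ∈ t
  · left; ext v; have := parity v; tauto
  · right; ext v; have := parity v; rw [Set.mem_compl_iff]; tauto

theorem hasOddCycle_sup_of_not_isBipartiteWith (hG : G.Preconnected)
    (hs : G.IsBipartiteWith s sᶜ) (hH : ¬ H.IsBipartiteWith s sᶜ) : (G ⊔ H).HasOddCycle := by
  obtain ⟨u, v, huv, hsame⟩ : ∃ u v, H.Adj u v ∧ (u ∈ s ↔ v ∈ s) := by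
    simpa [isBipartiteWith_compl_iff, not_iff, not_iff_not] using hH
  classical
  obtain ⟨p, hp⟩ : ∃ p : G.Walk v u, p.IsPath := ⟨_, (hG v u).some.bypass_isPath⟩
  refine ⟨u, .cons (Or.inr huv) (p.mapLe le_sup_left), ?_, ?_⟩
  · rw [Walk.cons_isCycle_iff, Walk.edges_mapLe_eq_edges]
    refine ⟨hp.mapLe _, fun he => ?_⟩
    have := isBipartiteWith_compl_iff.mp hs (p.adj_of_mem_edges he)
    tauto
  · rw [Walk.length_cons, Walk.length_mapLe, Nat.odd_add_one, Nat.not_odd_iff_even,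
      hs.even_length_iff]
    tauto

end SimpleGraph

theorem Fin.card_filter_val_even (n : ℕ) : #{i : Fin n | Even (i : ℕ)} = (n + 1) / 2 := by
  induction n with
  | zero => rfl
  | succ n ih =>
    have hsplit := card_filter_add_card_filter_not (s := univ) fun i : Fin n => Even (i : ℕ)
    rw [card_univ, Fintype.card_fin, ih] at hsplit
    simp only [Fin.card_filter_univ_succ, Fin.val_zero, Even.zero, if_true, Fin.val_succ,
      Nat.even_add_one]
    omega

section evenSide

variable {n : ℕ}

def evenSide (σ : Fin n ≃ Fin n) : Finset (Fin n) :=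
  ({i : Fin n | Even (i : ℕ)} : Finset (Fin n)).map σ.toEmbedding

theorem card_evenSide (σ : Fin n ≃ Fin n) : #(evenSide σ) = (n + 1) / 2 := by
  rw [evenSide, card_map, Fin.card_filter_val_even]

theorem isBipartiteWith_evenSide (σ : Fin n ≃ Fin n) :
    ((pathGraph n).map σ.toEmbedding).IsBipartiteWith ↑(evenSide σ) (↑(evenSide σ))ᶜ := by
  refine isBipartiteWith_compl_iff.mpr ?_
  rintro _ _ ⟨-, a, b, hab, rfl, rfl⟩
  simp only [evenSide, coe_map, Set.mem_image, mem_coe, mem_filter, mem_univ, true_and,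
    Equiv.coe_toEmbedding, σ.injective.eq_iff, exists_eq_right]
  rcases pathGraph_adj.mp hab with h | h <;> simp [← h, Nat.even_add_one]

theorem exists_evenSide_eq {A : Finset (Fin n)} (hA : #A = (n + 1) / 2) :
    ∃ σ : Fin n ≃ Fin n, evenSide σ = A := by
  let e : {i : Fin n // Even (i : ℕ)} ≃ {v // v ∈ A} := Fintype.equivOfCardEq <| by
    rw [Fintype.card_subtype, Fin.card_filter_val_even, Fintype.card_coe, hA]
  refine ⟨e.extendSubtype, eq_of_subset_of_card_le ?_ (by rw [card_evenSide, hA])⟩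
  intro v hv
  simp only [evenSide, mem_map, mem_filter, mem_univ, true_and] at hv
  obtain ⟨i, hi, rfl⟩ := hv
  exact e.extendSubtype_mem i hi

end evenSide

/-- Each balanced bipartition `{A, Aᶜ}` of `Fin n` is represented by its side `A` of size
`⌈n/2⌉`; for even `n`, by the side containing `0`. -/
def balancedSides (n : ℕ) [NeZero n] : Finset (Finset (Fin n)) :=
  {A ∈ powersetCard ((n + 1) / 2) univ | Odd n ∨ 0 ∈ A}

section balancedSides

variable {n : ℕ} [NeZero n] {A : Finset (Fin n)}

theorem card_of_mem_balancedSides (hA : A ∈ balancedSides n) : #A = (n + 1) / 2 :=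
  mem_powersetCard_univ.mp (mem_filter.mp hA).1

theorem compl_notMem_balancedSides (hA : A ∈ balancedSides n) : Aᶜ ∉ balancedSides n := by
  simp only [balancedSides, mem_filter, mem_powersetCard_univ, card_compl, Fintype.card_fin,
    mem_compl] at hA ⊢
  rcases Nat.even_or_odd n with hn | hn
  · simp_all [Nat.not_odd_iff_even.mpr hn]
  · obtain ⟨k, rfl⟩ := hn
    omega

theorem mem_or_compl_mem_balancedSides (hA : #A = (n + 1) / 2) :
    A ∈ balancedSides n ∨ Aᶜ ∈ balancedSides n := by
  simp only [balancedSides, mem_filter, mem_powersetCard_univ, card_compl, Fintype.card_fin,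
    mem_compl, hA]
  rcases Nat.even_or_odd n with ⟨k, rfl⟩ | hn
  · have hcompl : k + k - (k + k + 1) / 2 = (k + k + 1) / 2 := by omega
    by_cases h0 : (0 : Fin (k + k)) ∈ A <;> simp [h0, hcompl]
  · simp [hn]

theorem card_balancedSides :
    #(balancedSides n) = if Odd n then n.choose ((n - 1) / 2) else n.choose (n / 2) / 2 := by
  split_ifs with hn
  · obtain ⟨k, rfl⟩ := hn
    rw [balancedSides, filter_true_of_mem fun _ _ => Or.inl ⟨k, rfl⟩, card_powersetCard,
      card_univ, Fintype.card_fin, show (2 * k + 1 + 1) / 2 = k + 1 by omega,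
      show (2 * k + 1 - 1) / 2 = k by omega, Nat.choose_symm_half]
  · obtain ⟨k, rfl⟩ : ∃ k, n = 2 * k + 2 := by
      have := NeZero.ne n
      rcases Nat.not_odd_iff_even.mp hn with ⟨j, rfl⟩
      exact ⟨j - 1, by omega⟩
    have hsub : balancedSides (2 * k + 2) =
        {A ∈ powersetCard (k + 1) (univ : Finset (Fin (2 * k + 2))) | {0} ⊆ A} := by
      simp only [balancedSides, singleton_subset_iff, hn, false_or,
        show (2 * k + 2 + 1) / 2 = k + 1 by omega]
    rw [hsub, card_filter_powersetCard_subset _ _ _ (subset_univ _) (by simp),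
      card_univ, Fintype.card_fin, card_singleton, show (2 * k + 2) / 2 = k + 1 by omega,
      Nat.choose_succ_succ', Nat.choose_symm_half, show 2 * k + 2 - 1 = 2 * k + 1 by omega,
      Nat.add_sub_cancel]
    omega

end balancedSides

section hamPath

variable {n : ℕ} [NeZero n] {G : SimpleGraph (Fin n)}

theorem IsHamPathGraph.connected (h : IsHamPathGraph G) : G.Connected := by
  obtain ⟨σ, rfl⟩ := h
  obtain ⟨m, rfl⟩ := Nat.exists_eq_add_one_of_ne_zero (NeZero.ne n)
  exact (Iso.map σ (pathGraph (m + 1))).connected_iff.mp (pathGraph_connected m)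

theorem IsHamPathGraph.exists_balancedSide (h : IsHamPathGraph G) :
    ∃ A ∈ balancedSides n, G.IsBipartiteWith ↑A (↑A)ᶜ := by
  obtain ⟨σ, rfl⟩ := h
  rcases mem_or_compl_mem_balancedSides (card_evenSide σ) with hA | hA
  · exact ⟨_, hA, isBipartiteWith_evenSide σ⟩
  · refine ⟨_, hA, ?_⟩
    rw [coe_compl, compl_compl]
    exact (isBipartiteWith_evenSide σ).symm

theorem SimpleGraph.Connected.eq_of_isBipartiteWith_of_mem_balancedSides (hG : G.Connected)
    {A B : Finset (Fin n)} (hA : A ∈ balancedSides n) (hB : B ∈ balancedSides n)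
    (hGA : G.IsBipartiteWith ↑A (↑A)ᶜ) (hGB : G.IsBipartiteWith ↑B (↑B)ᶜ) : A = B := by
  rcases hGA.eq_or_eq_compl_of_connected hG hGB with h | h
  · exact_mod_cast h
  · rw [← coe_compl, coe_inj] at h
    exact absurd (h ▸ hA) (compl_notMem_balancedSides hB)

theorem card_le_card_balancedSides {F : Finset (SimpleGraph (Fin n))}
    (hF : ∀ G ∈ F, IsHamPathGraph G)
    (hodd : (F : Set (SimpleGraph (Fin n))).Pairwise fun G H => (G ⊔ H).HasOddCycle) :
    #F ≤ #(balancedSides n) := by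
  choose! side hside hbip using fun G hG => (hF G hG).exists_balancedSide
  refine card_le_card_of_injOn side hside fun G hG H hH hGH => ?_
  by_contra hne
  exact ((hbip G hG).sup (hGH ▸ hbip H hH)).not_hasOddCycle (hodd hG hH hne)

theorem exists_separated_hamPath_family :
    ∃ F : Finset (SimpleGraph (Fin n)), (∀ G ∈ F, IsHamPathGraph G) ∧
      (F : Set (SimpleGraph (Fin n))).Pairwise (fun G H => (G ⊔ H).HasOddCycle) ∧
      #F = #(balancedSides n) := by
  classical
  have hrealised : ∀ A ∈ balancedSides n, ∃ σ : Fin n ≃ Fin n, evenSide σ = A :=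
    fun _ hA => exists_evenSide_eq (card_of_mem_balancedSides hA)
  choose! σ hσ using hrealised
  set P := fun A => (pathGraph n).map (σ A).toEmbedding
  have hP (A) : IsHamPathGraph (P A) := ⟨σ A, rfl⟩
  have hbip : ∀ A ∈ balancedSides n, (P A).IsBipartiteWith ↑A (↑A)ᶜ :=
    fun A hA => by simpa only [hσ A hA] using isBipartiteWith_evenSide (σ A)
  have hunique : ∀ A ∈ balancedSides n, ∀ B ∈ balancedSides n,
      (P B).IsBipartiteWith ↑A (↑A)ᶜ → A = B :=
    fun A hA B hB h =>
      (hP B).connected.eq_of_isBipartiteWith_of_mem_balancedSides hA hB h (hbip B hB)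
  refine ⟨(balancedSides n).image P, forall_mem_image.mpr fun A _ => hP A, ?_,
    card_image_of_injOn fun A hA B hB (hAB : P A = P B) => hunique A hA B hB (hAB ▸ hbip A hA)⟩
  rw [coe_image]
  rintro _ ⟨A, hA, rfl⟩ _ ⟨B, hB, rfl⟩ hne
  exact hasOddCycle_sup_of_not_isBipartiteWith (hP A).connected.preconnected (hbip A hA)
    fun h => hne (congrArg P (hunique A hA B hB h))

end hamPath

theorem max_odd_cycle_separated_ham_paths (n : ℕ) (hn : 2 ≤ n) :
    IsGreatest {m : ℕ | ∃ F : Finset (SimpleGraph (Fin n)),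
        (∀ G ∈ F, IsHamPathGraph G) ∧
        (F : Set (SimpleGraph (Fin n))).Pairwise (fun G H =>
          ∃ (v : Fin n) (c : (G ⊔ H).Walk v v), c.IsCycle ∧ Odd c.length) ∧
        F.card = m}
      (if Odd n then n.choose ((n - 1) / 2) else n.choose (n / 2) / 2) := by
  have : NeZero n := ⟨by omega⟩
  rw [← card_balancedSides]
  exact ⟨exists_separated_hamPath_family,
    fun m ⟨F, hF, hodd, hm⟩ => hm ▸ card_le_card_balancedSides hF hodd⟩
end

section
/- For every even integer n ≥ 2, the edge set of the complete graph K_n can be decomposed into n/2 pairwise edge-disjoint Hamiltonian paths. -/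
open SimpleGraph

/-!
Walecki's construction. Identify the vertices with `ℤ/n`, `n = 2m`. The zigzag path
`m-1, m, m-2, m+1, …, 0, n-1` joins exactly the pairs `x ≠ y` with `x + y ∈ {-2, -1}`: its
consecutive sums alternate between `n-1` and `n-2`, and every such pair is `{m-1-t, m+t}` or
`{m+t, m-2-t}`. Translating it by `k + 1` gives the Hamiltonian path made of all pairs with
`x + y ∈ {2k, 2k+1}`; as `k` runs over `0, …, m-1` these classes of sums partition `ℤ/n`, so the
`m` translates partition the edges of `K_n`.
-/

namespace Walecki

open Fin.CommRing

lemma map_equiv_adj_apply {V W : Type*} (G : SimpleGraph V) (e : V ≃ W) {a b : V} :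
    (G.map e.toEmbedding).Adj (e a) (e b) ↔ G.Adj a b :=
  map_adj_apply (f := e.toEmbedding)

def zigzag (n : ℕ) (i : Fin n) : Fin n :=
  ⟨if i.val % 2 = 0 then n / 2 - 1 - i.val / 2 else n / 2 + i.val / 2, by
    have := i.isLt; split <;> omega⟩

lemma zigzag_injective {n : ℕ} (hn : Even n) : Function.Injective (zigzag n) := by
  obtain ⟨m, rfl⟩ := hn
  intro i j h
  have := i.isLt
  have := j.isLt
  simp only [zigzag, Fin.mk.injEq] at h
  ext
  split_ifs at h <;> omega

noncomputable def zigzagEquiv {n : ℕ} (hn : Even n) : Fin n ≃ Fin n :=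
  Equiv.ofBijective (zigzag n) (Finite.injective_iff_bijective.mp (zigzag_injective hn))

section SumGraph

variable {n : ℕ} [NeZero n]

def sumGraph (s : Fin n) : SimpleGraph (Fin n) where
  Adj x y := x ≠ y ∧ (x + y = s ∨ x + y = s + 1)
  symm.symm _ _ h := ⟨h.1.symm, add_comm (G := Fin n) _ _ ▸ h.2⟩
  loopless.irrefl _ h := h.1 rfl

@[simp]
lemma sumGraph_adj {s x y : Fin n} :
    (sumGraph s).Adj x y ↔ x ≠ y ∧ (x + y = s ∨ x + y = s + 1) :=
  Iff.rfl

lemma sumGraph_map_addRight (s t : Fin n) :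
    (sumGraph s).map (Equiv.addRight t).toEmbedding = sumGraph (s + 2 * t) := by
  ext x y
  obtain ⟨x, rfl⟩ := (Equiv.addRight t).surjective x
  obtain ⟨y, rfl⟩ := (Equiv.addRight t).surjective y
  have translate : ∀ c, x + t + (y + t) = c + 2 * t ↔ x + y = c := fun c => by
    constructor <;> intro h <;> linear_combination h
  rw [map_equiv_adj_apply, sumGraph_adj, sumGraph_adj, (Equiv.addRight t).injective.ne_iff,
    add_right_comm s, Equiv.coe_addRight, translate, translate]

lemma sumGraph_natCast_sub_two_adj_iff (hn : 2 ≤ n) {x y : Fin n} :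
    (sumGraph ((n - 2 : ℕ) : Fin n)).Adj x y ↔
      x ≠ y ∧ (x.val + y.val + 2 = n ∨ x.val + y.val + 1 = n) := by
  have hs : ((n - 2 : ℕ) : Fin n) + 1 = ((n - 1 : ℕ) : Fin n) := by
    rw [show n - 1 = n - 2 + 1 by omega]; push_cast; rfl
  simp only [sumGraph_adj, hs, Fin.ext_iff, Fin.val_natCast, Fin.val_add_eq_ite,
    Nat.mod_eq_of_lt (show n - 2 < n by omega), Nat.mod_eq_of_lt (show n - 1 < n by omega)]
  have := x.isLt
  have := y.isLt
  -- `x ≠ y` excludes the only wrapped-around sum in the class, `(n - 1) + (n - 1)`.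
  constructor <;> rintro ⟨hxy, h⟩ <;> refine ⟨hxy, ?_⟩ <;> split_ifs at * <;> omega

lemma pathGraph_map_zigzagEquiv (hn : Even n) (h2 : 2 ≤ n) :
    (pathGraph n).map (zigzagEquiv hn).toEmbedding = sumGraph ((n - 2 : ℕ) : Fin n) := by
  ext x y
  obtain ⟨i, rfl⟩ := (zigzagEquiv hn).surjective x
  obtain ⟨j, rfl⟩ := (zigzagEquiv hn).surjective y
  rw [map_equiv_adj_apply, sumGraph_natCast_sub_two_adj_iff h2, pathGraph_adj]
  obtain ⟨m, rfl⟩ := hn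
  have := i.isLt
  have := j.isLt
  simp only [zigzagEquiv, Equiv.ofBijective_apply, zigzag, ne_eq, Fin.mk.injEq]
  split_ifs <;> omega

noncomputable def waleckiPath (n : ℕ) [NeZero n] (k : ℕ) : SimpleGraph (Fin n) :=
  sumGraph (2 * (k : Fin n))

lemma isHamPathGraph_waleckiPath (hn : Even n) (h2 : 2 ≤ n) (k : ℕ) :
    IsHamPathGraph (waleckiPath n k) := by
  refine ⟨(zigzagEquiv hn).trans (Equiv.addRight (k + 1)), ?_⟩
  have hs : 2 * (k : Fin n) = ((n - 2 : ℕ) : Fin n) + 2 * (k + 1) := by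
    rw [Nat.cast_sub h2, Fin.natCast_self]; ring
  rw [waleckiPath, hs, ← sumGraph_map_addRight, ← pathGraph_map_zigzagEquiv hn h2, map_map]
  rfl

lemma waleckiPath_adj_iff {k : ℕ} (hk : 2 * k + 1 < n) {x y : Fin n} :
    (waleckiPath n k).Adj x y ↔ x ≠ y ∧ (x + y).val / 2 = k := by
  have h0 : 2 * (k : Fin n) = ((2 * k : ℕ) : Fin n) := by push_cast; rfl
  have h1 : 2 * (k : Fin n) + 1 = ((2 * k + 1 : ℕ) : Fin n) := by push_cast; rfl
  rw [waleckiPath, sumGraph_adj, h1, h0]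
  simp only [Fin.ext_iff, Fin.val_natCast, Nat.mod_eq_of_lt hk,
    Nat.mod_eq_of_lt (show 2 * k < n by omega)]
  omega

lemma waleckiPath_injOn : Set.InjOn (waleckiPath n) {k | 2 * k + 1 < n} := by
  intro k hk l hl hkl
  have hval : (((2 * k + 1 : ℕ) : Fin n)).val = 2 * k + 1 := Fin.val_cast_of_lt hk
  have hedge : (waleckiPath n k).Adj 0 ((2 * k + 1 : ℕ) : Fin n) :=
    (waleckiPath_adj_iff hk).2 ⟨fun h => by simp [← h] at hval, by rw [zero_add, hval]; omega⟩
  rw [hkl, waleckiPath_adj_iff hl, zero_add, hval] at hedge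
  omega

lemma disjoint_edgeSet_waleckiPath {k l : ℕ} (hk : 2 * k + 1 < n) (hl : 2 * l + 1 < n)
    (hkl : k ≠ l) : Disjoint (waleckiPath n k).edgeSet (waleckiPath n l).edgeSet := by
  rw [Set.disjoint_left]
  intro e
  induction e using Sym2.ind with
  | _ a b =>
    intro hak hal
    exact hkl (((waleckiPath_adj_iff hk).1 hak).2.symm.trans ((waleckiPath_adj_iff hl).1 hal).2)

end SumGraph

end Walecki

open Walecki in
theorem complete_graph_decomposes_into_ham_paths (n : ℕ) (hn : 2 ≤ n) (hne : Even n) :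
    ∃ F : Finset (SimpleGraph (Fin n)),
      F.card = n / 2 ∧
      (∀ G ∈ F, IsHamPathGraph G) ∧
      (F : Set (SimpleGraph (Fin n))).Pairwise
        (fun G H => Disjoint G.edgeSet H.edgeSet) ∧
      ∀ e ∈ (⊤ : SimpleGraph (Fin n)).edgeSet, ∃ G ∈ F, e ∈ G.edgeSet := by
  have : NeZero n := ⟨by omega⟩
  classical
  have hrange : ∀ k, k < n / 2 ↔ 2 * k + 1 < n := by
    obtain ⟨m, rfl⟩ := hne; omega
  refine ⟨(Finset.range (n / 2)).image (waleckiPath n), ?_, ?_, ?_, ?_⟩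
  · rw [Finset.card_image_of_injOn, Finset.card_range]
    exact waleckiPath_injOn.mono fun k hk => (hrange k).1 (Finset.mem_range.mp hk)
  · simp only [Finset.mem_image, forall_exists_index, and_imp, forall_apply_eq_imp_iff₂]
    exact fun k _ => isHamPathGraph_waleckiPath hne hn k
  · rintro _ hG _ hH hGH
    obtain ⟨k, hk, rfl⟩ := Finset.mem_image.1 hG
    obtain ⟨l, hl, rfl⟩ := Finset.mem_image.1 hH
    exact disjoint_edgeSet_waleckiPath ((hrange k).1 (Finset.mem_range.1 hk))
      ((hrange l).1 (Finset.mem_range.1 hl)) (fun h => hGH (h ▸ rfl))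
  · intro e he
    induction e using Sym2.ind with
    | _ a b =>
      have hlt : (a + b).val / 2 < n / 2 := by
        have := (a + b).isLt; obtain ⟨m, rfl⟩ := hne; omega
      exact ⟨_, Finset.mem_image_of_mem _ (Finset.mem_range.2 hlt),
        (waleckiPath_adj_iff ((hrange _).1 hlt)).2 ⟨he, rfl⟩⟩
end

section
/- For every fixed integer k ≥ 3 and every n ≥ 1, P(n,k) ≤ 2^{H((k−2)/(2k−2), (k−2)/(2k−2), 2/(2k−2)) · n}, where H(x₁,x₂,x₃) = −x₁log₂x₁ − x₂log₂x₂ − x₃log₂x₃ is the ternary entropy function. -/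
/-- Two permutations of `[n]` (written as sequences `π 0, π 1, …, π (n-1)`) are
`k`-neighbor separated: there are two elements occupying adjacent positions in one of
them whose positions in the other differ by exactly `k - 1`. -/
def NeighborSep (n k : ℕ) (π σ : Equiv.Perm (Fin n)) : Prop :=
  ∃ x y : Fin n,
    (((π.symm x : ℤ) - (π.symm y : ℤ)).natAbs = 1 ∧
      ((σ.symm x : ℤ) - (σ.symm y : ℤ)).natAbs = k - 1) ∨
    (((σ.symm x : ℤ) - (σ.symm y : ℤ)).natAbs = 1 ∧
      ((π.symm x : ℤ) - (π.symm y : ℤ)).natAbs = k - 1)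

/-- `permP n k`: the maximum size of a family of permutations of `[n]` that are
pairwise `k`-neighbor separated. -/
noncomputable def permP (n k : ℕ) : ℕ :=
  sSup {m : ℕ | ∃ F : Finset (Equiv.Perm (Fin n)),
    (F : Set (Equiv.Perm (Fin n))).Pairwise (NeighborSep n k) ∧ F.card = m}

/-- The ternary entropy function (logarithms in base 2). -/
noncomputable def ternaryEntropy (x₁ x₂ x₃ : ℝ) : ℝ :=
  -(x₁ * Real.logb 2 x₁) - x₂ * Real.logb 2 x₂ - x₃ * Real.logb 2 x₃


/-!
Colour the positions `p` of `[n]` by the pattern `A…A B C…C B` of period `2(k-1)` with `k-2`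
letters `A` and `k-2` letters `C`: `B` where `k-1 ∣ p+1`, otherwise `A` or `C` according to the
parity of `p / (k-1)` (`stripeColor`, with `B = none`). Positions at distance `k-1` carry colours
`B, B` or `A, C` in some order, adjacent positions never do; so a separated family injects into
the colourings of `[n]`, the permutation `π` giving element `q` the colour of its position.
With weight `y = 2/(2k-2)` on `B` and `x = (k-2)/(2k-2)` on `A` and `C`, all colourings together
weigh `(2x+y)^n = 1`, each one in the image weighs `y^b x^(n-b)` with `b` the number of `B`
positions, and this is at least `2^(-H n)` provided `b - yn` has the sign of `y - x`. This holds
for the pattern itself when `k ≥ 4` (`b ≤ n/(k-1)`) and for the pattern shifted by one when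
`k = 3` (`b ≥ n/2`).
-/

open Finset

def stripeColor (m p : ℕ) : Option Bool :=
  if m ∣ p + 1 then none else some (p / m).bodd

theorem stripeColor_add_self {m : ℕ} (hm : 0 < m) (p : ℕ) :
    stripeColor m (p + m) = (stripeColor m p).map not := by
  have hdvd : m ∣ p + m + 1 ↔ m ∣ p + 1 := by
    rw [add_right_comm]
    exact Nat.dvd_add_self_right
  unfold stripeColor
  rw [Nat.add_div_right p hm, Nat.bodd_succ]
  split_ifs <;> simp_all

theorem stripeColor_succ_ne {m : ℕ} (hm : 2 ≤ m) (p : ℕ) :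
    stripeColor m (p + 1) ≠ (stripeColor m p).map not := by
  unfold stripeColor
  by_cases h : m ∣ p + 1
  · have hsucc : ¬ m ∣ p + 1 + 1 := fun h' =>
      absurd (Nat.le_of_dvd one_pos ((Nat.dvd_add_right h).mp h')) (by omega)
    simp [h, hsucc]
  · rw [Nat.succ_div_of_not_dvd h]
    split_ifs <;> simp

theorem rel_of_natAbs_sub_eq {α : Type*} {R : α → α → Prop} (hR : ∀ a b, R a b → R b a)
    {c : ℕ → α} {d : ℕ} (hstep : ∀ p, R (c p) (c (p + d))) {p q : ℕ}
    (h : ((p : ℤ) - q).natAbs = d) :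
    R (c p) (c q) := by
  obtain rfl | rfl : q = p + d ∨ p = q + d := by omega
  · exact hstep p
  · exact hR _ _ (hstep q)

section Colorings

variable {α : Type*} {R : α → α → Prop} (hR : ∀ a b, R a b → R b a) {c : ℕ → α}
  {k n : ℕ} (hdist : ∀ p, R (c p) (c (p + (k - 1)))) (hadj : ∀ p, ¬ R (c p) (c (p + 1)))
include hR hdist hadj

theorem comp_symm_ne_of_adjacent_of_dist {π σ : Equiv.Perm (Fin n)} {x y : Fin n}
    (h₁ : ((π.symm x : ℤ) - (π.symm y : ℤ)).natAbs = 1)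
    (h₂ : ((σ.symm x : ℤ) - (σ.symm y : ℤ)).natAbs = k - 1) :
    (fun q => c (π.symm q)) ≠ (fun q => c (σ.symm q)) := by
  intro h
  have hπ := rel_of_natAbs_sub_eq (R := fun a b => ¬ R a b) (fun a b h h' => h (hR b a h'))
    hadj h₁
  have hσ := rel_of_natAbs_sub_eq hR hdist h₂
  exact hπ (by simpa only [congrFun h] using hσ)

theorem injOn_comp_symm_of_pairwise_neighborSep {F : Set (Equiv.Perm (Fin n))}
    (hF : F.Pairwise (NeighborSep n k)) :
    F.InjOn fun π q => c (π.symm q) := by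
  intro π hπ σ hσ h
  by_contra hne
  obtain ⟨x, y, ⟨h₁, h₂⟩ | ⟨h₁, h₂⟩⟩ := hF hπ hσ hne
  · exact comp_symm_ne_of_adjacent_of_dist hR hdist hadj h₁ h₂ h
  · exact comp_symm_ne_of_adjacent_of_dist hR hdist hadj h₁ h₂ h.symm

end Colorings

theorem card_mul_prod_le_one {ι α : Type*} [Fintype ι] [Fintype α] {w : α → ℝ}
    (hw₀ : ∀ a, 0 ≤ w a) (hw₁ : ∑ a, w a = 1) (c : ι → α) {F : Finset (Equiv.Perm ι)}
    (hF : Set.InjOn (fun (σ : Equiv.Perm ι) q => c (σ.symm q)) F) :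
    #F * ∏ i, w (c i) ≤ 1 := by
  classical
  calc #F * ∏ i, w (c i) = ∑ σ ∈ F, ∏ q, w (c (σ.symm q)) := by
        simp only [fun σ : Equiv.Perm ι => Equiv.prod_comp σ.symm (fun i => w (c i)), sum_const,
          nsmul_eq_mul]
    _ = ∑ g ∈ F.image fun (σ : Equiv.Perm ι) q => c (σ.symm q), ∏ q, w (g q) :=
        (sum_image (f := fun g => ∏ q, w (g q)) hF).symm
    _ ≤ ∑ g : ι → α, ∏ q, w (g q) :=
        sum_le_sum_of_subset_of_nonneg (subset_univ _) fun g _ _ => prod_nonneg fun q _ => hw₀ _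
    _ = 1 := by rw [← Fintype.prod_sum, hw₁, prod_const_one]

theorem prod_ite_eq_pow_mul_pow {ι M : Type*} [CommMonoid M] (s : Finset ι) (P : ι → Prop)
    [DecidablePred P] (a b : M) :
    ∏ i ∈ s, (if P i then a else b) = a ^ #{i ∈ s | P i} * b ^ (#s - #{i ∈ s | P i}) := by
  rw [prod_ite, prod_const, prod_const, ← card_filter_add_card_filter_not (s := s) P,
    Nat.add_sub_cancel_left]

theorem card_mul_pow_mul_pow_le_one {n k : ℕ} (hk : 3 ≤ k) {F : Finset (Equiv.Perm (Fin n))}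
    (hF : (F : Set (Equiv.Perm (Fin n))).Pairwise (NeighborSep n k)) (s : ℕ) {x y : ℝ}
    (hx : 0 ≤ x) (hy : 0 ≤ y) (hxy : 2 * x + y = 1) :
    #F * (y ^ #{p ∈ range n | k - 1 ∣ p + s + 1} *
      x ^ (n - #{p ∈ range n | k - 1 ∣ p + s + 1})) ≤ 1 := by
  let c : ℕ → Option Bool := fun p => stripeColor (k - 1) (p + s)
  have hinj := injOn_comp_symm_of_pairwise_neighborSep (c := c) (R := fun a b => b = a.map not)
    (by rintro (_ | _) b rfl <;> simp)
    (fun p => by simpa only [c, add_right_comm] using stripeColor_add_self (by omega) (p + s))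
    (fun p => by simpa only [c, add_right_comm] using stripeColor_succ_ne (by omega) (p + s)) hF
  have hprod := card_mul_prod_le_one (w := fun o => if o = none then y else x)
    (fun o => by positivity) (by simp [Fintype.sum_option]; linarith) (fun p : Fin n => c p) hinj
  have hnone : #{p ∈ range n | c p = none} = #{p ∈ range n | k - 1 ∣ p + s + 1} :=
    congrArg card (filter_congr fun p _ => by simp [c, stripeColor])
  rwa [Fin.prod_univ_eq_prod_range (fun p => if c p = none then y else x),
    prod_ite_eq_pow_mul_pow, card_range, hnone] at hprod

open Real in
theorem two_rpow_neg_ternaryEntropy_mul_le {x y : ℝ} (hx : 0 < x) (hy : 0 < y)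
    (hxy : 2 * x + y = 1) {n b : ℕ} (hb : b ≤ n) (h : 0 ≤ (b - y * n) * (log y - log x)) :
    (2 : ℝ) ^ (-(ternaryEntropy x x y * n)) ≤ y ^ b * x ^ (n - b) := by
  have hH : ternaryEntropy x x y * log 2 = -(2 * x * log x + y * log y) := by
    simp only [ternaryEntropy, logb]
    field_simp
    ring
  rw [← log_le_log_iff (by positivity) (by positivity), log_rpow two_pos,
    log_mul (by positivity) (by positivity), log_pow, log_pow, Nat.cast_sub hb]
  linear_combination h + n * log x * hxy - n * hH

theorem le_two_mul_card_filter_two_dvd_add_two (n : ℕ) :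
    n ≤ 2 * #{p ∈ range n | 2 ∣ p + 1 + 1} := by
  have h := card_filter_add_card_filter_not (s := range n) (fun p => 2 ∣ p + 1)
  rw [Nat.card_multiples, card_range] at h
  have hodd : #{p ∈ range n | ¬ 2 ∣ p + 1} = #{p ∈ range n | 2 ∣ p + 1 + 1} :=
    congrArg card (filter_congr fun p _ => by omega)
  omega

open Real in
theorem exists_shift {k : ℕ} (hk : 3 ≤ k) (n : ℕ) :
    ∃ s, 0 ≤ ((#{p ∈ range n | k - 1 ∣ p + s + 1} : ℝ) - 2 / (2 * k - 2) * n) *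
      (log (2 / (2 * k - 2)) - log ((k - 2) / (2 * k - 2))) := by
  have hk' : (3 : ℝ) ≤ k := by exact_mod_cast hk
  have hden : 0 < 2 * (k : ℝ) - 2 := by linarith
  rcases hk.eq_or_lt with rfl | hk4
  · refine ⟨1, mul_nonneg ?_ (sub_nonneg.mpr (log_le_log (by norm_num) (by norm_num)))⟩
    have hcount : (n : ℝ) ≤ 2 * #{p ∈ range n | 3 - 1 ∣ p + 1 + 1} := by
      exact_mod_cast le_two_mul_card_filter_two_dvd_add_two n
    norm_num at hcount ⊢
    linarith
  · have hk4' : (4 : ℝ) ≤ k := by exact_mod_cast hk4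
    refine ⟨0, mul_nonneg_of_nonpos_of_nonpos ?_
      (sub_nonpos.mpr (log_le_log (by positivity) ?_))⟩
    · have hcount : (#{p ∈ range n | k - 1 ∣ p + 0 + 1} : ℝ) ≤ n / (k - 1 : ℕ) := by
        simp only [add_zero, Nat.card_multiples]
        exact Nat.cast_div_le
      rw [Nat.cast_sub (by omega), Nat.cast_one] at hcount
      rw [sub_nonpos, div_mul_eq_mul_div, show 2 * (k : ℝ) - 2 = 2 * (k - 1) by ring,
        mul_div_mul_left _ _ two_ne_zero]
      linarith
    · exact div_le_div_of_nonneg_right (by linarith) hden.le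

theorem exists_pairwise_neighborSep_card_eq_permP (n k : ℕ) :
    ∃ F : Finset (Equiv.Perm (Fin n)),
      (F : Set (Equiv.Perm (Fin n))).Pairwise (NeighborSep n k) ∧ #F = permP n k := by
  refine Nat.sSup_mem (s := {m | ∃ F : Finset (Equiv.Perm (Fin n)),
    (F : Set (Equiv.Perm (Fin n))).Pairwise (NeighborSep n k) ∧ #F = m})
    ⟨0, ∅, by simp⟩ ⟨Fintype.card (Equiv.Perm (Fin n)), ?_⟩
  rintro m ⟨F, -, rfl⟩
  exact card_le_univ F

theorem permP_entropy_upper_bound_general (k : ℕ) (hk : 3 ≤ k) (n : ℕ) :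
    (permP n k : ℝ) ≤
      2 ^ (ternaryEntropy ((k - 2) / (2 * k - 2)) ((k - 2) / (2 * k - 2))
            (2 / (2 * k - 2)) * n) := by
  obtain ⟨F, hF, hcard⟩ := exists_pairwise_neighborSep_card_eq_permP n k
  obtain ⟨s, hs⟩ := exists_shift hk n
  set x : ℝ := (k - 2) / (2 * k - 2)
  set y : ℝ := 2 / (2 * k - 2)
  have hk' : (3 : ℝ) ≤ k := by exact_mod_cast hk
  have hden : 0 < 2 * (k : ℝ) - 2 := by linarith
  have hx : 0 < x := div_pos (by linarith) hden
  have hy : 0 < y := div_pos two_pos hden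
  have hxy : 2 * x + y = 1 := by
    rw [mul_div_assoc', ← add_div, div_eq_one_iff_eq hden.ne']
    ring
  have hweight := two_rpow_neg_ternaryEntropy_mul_le hx hy hxy
    ((card_filter_le _ _).trans (card_range n).le) hs
  have h := (mul_le_mul_of_nonneg_left hweight (Nat.cast_nonneg #F)).trans
    (card_mul_pow_mul_pow_le_one hk hF s hx.le hy.le hxy)
  rwa [Real.rpow_neg zero_le_two, ← div_eq_mul_inv, div_le_one (by positivity), hcard] at h

theorem permP_entropy_upper_bound (k : ℕ) (hk : 3 ≤ k) (n : ℕ) (hn : 1 ≤ n) :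
    (permP n k : ℝ) ≤
      2 ^ (ternaryEntropy ((k - 2) / (2 * k - 2)) ((k - 2) / (2 * k - 2))
            (2 / (2 * k - 2)) * n) :=
  permP_entropy_upper_bound_general k hk n
end

section
/- For every ε > 0 there exists an integer K such that for every k ≥ K and every n ≥ 1, P(n,k) ≤ (2+ε)^n. In other words, limsup_{k→∞} limsup_{n→∞} P(n,k)^{1/n} ≤ 2. -/
open Finset

def blockParity (c p : ℕ) : Bool := Nat.bodd (p / c)

theorem blockParity_succ (c p : ℕ) :
    blockParity c (p + 1) = (blockParity c p ^^ decide (c ∣ p + 1)) := by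
  unfold blockParity
  rw [Nat.succ_div]
  split_ifs with h <;> simp [h]

theorem blockParity_add_self {c : ℕ} (hc : 0 < c) (p : ℕ) :
    blockParity c (p + c) = !blockParity c p := by
  simp [blockParity, Nat.add_div_right p hc]

theorem dvd_succ_of_blockParity_succ_ne {c p : ℕ}
    (h : blockParity c p ≠ blockParity c (p + 1)) : c ∣ p + 1 := by
  by_contra h'
  simp [blockParity_succ, h'] at h

theorem exists_blockParity_add_eq {c : ℕ} (hc : 2 ≤ c) (p : ℕ) :
    ∃ s ≤ 1, blockParity c (p + s) = blockParity c (p + 1 + s) := by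
  by_contra! h
  have h0 := dvd_succ_of_blockParity_succ_ne (h 0 zero_le_one)
  have h1 := dvd_succ_of_blockParity_succ_ne (h 1 le_rfl)
  have := Nat.le_of_dvd one_pos ((Nat.dvd_add_right h0).mp h1)
  omega

namespace Equiv.Perm

variable {n : ℕ}

/-- By `blockParity_succ`, the second component turns the first into the colouring by the blocks
shifted by one. -/
def blockSignature (c : ℕ) (π : Equiv.Perm (Fin n)) : (Fin n → Bool) × Finset (Fin n) :=
  (fun x => blockParity c (π.symm x), ({x | c ∣ (π.symm x : ℕ) + 1} : Finset (Fin n)))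

theorem card_blockSignature_snd (c : ℕ) (π : Equiv.Perm (Fin n)) :
    #(π.blockSignature c).2 = n / c := by
  rw [← Nat.card_multiples, blockSignature,
    card_equiv π.symm (t := {i : Fin n | c ∣ (i : ℕ) + 1}) (by simp)]
  refine card_nbij (fun i => i.val) (fun i hi => ?_) (fun a _ b _ h => Fin.ext h)
    (fun e he => ?_)
  · simp_all
  · simp only [coe_filter, mem_range, Set.mem_ofPred_eq] at he
    exact ⟨⟨e, he.1⟩, by simp [he.2]⟩

theorem blockParity_add_eq_of_blockSignature_eq {c : ℕ} {π σ : Equiv.Perm (Fin n)}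
    (h : π.blockSignature c = σ.blockSignature c) (x : Fin n) {s : ℕ} (hs : s ≤ 1) :
    blockParity c (π.symm x + s) = blockParity c (σ.symm x + s) := by
  simp only [blockSignature, Prod.mk.injEq, funext_iff, Finset.ext_iff, mem_filter, mem_univ,
    true_and] at h
  interval_cases s
  · exact h.1 x
  · simp only [blockParity_succ, h.1 x]
    simpa using h.2 x

theorem natAbs_sub_ne_of_blockSignature_eq {c : ℕ} (hc : 2 ≤ c) {π σ : Equiv.Perm (Fin n)}
    (h : π.blockSignature c = σ.blockSignature c) {x y : Fin n}
    (hadj : ((π.symm x : ℤ) - π.symm y).natAbs = 1) :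
    ((σ.symm x : ℤ) - σ.symm y).natAbs ≠ c := by
  intro hfar
  wlog hxy : (π.symm y : ℕ) = π.symm x + 1 generalizing x y
  · exact this (x := y) (y := x) (by omega) (by omega) (by omega)
  obtain ⟨s, hs, hpar⟩ := exists_blockParity_add_eq hc (π.symm x)
  rw [← hxy, blockParity_add_eq_of_blockSignature_eq h x hs,
    blockParity_add_eq_of_blockSignature_eq h y hs] at hpar
  rcases (by omega : (σ.symm y : ℕ) = σ.symm x + c ∨ (σ.symm x : ℕ) = σ.symm y + c) with e | e
  all_goals
    rw [e, add_right_comm, blockParity_add_self (by omega)] at hpar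
    simp at hpar

theorem not_neighborSep_of_blockSignature_eq {c : ℕ} (hc : 2 ≤ c) {π σ : Equiv.Perm (Fin n)}
    (h : π.blockSignature c = σ.blockSignature c) : ¬ NeighborSep n (c + 1) π σ := by
  rintro ⟨x, y, ⟨hadj, hfar⟩ | ⟨hadj, hfar⟩⟩
  · exact natAbs_sub_ne_of_blockSignature_eq hc h hadj hfar
  · exact natAbs_sub_ne_of_blockSignature_eq hc h.symm hadj hfar

end Equiv.Perm

theorem permP_le_of_forall_card_le {n k B : ℕ}
    (h : ∀ F : Finset (Equiv.Perm (Fin n)),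
      (F : Set (Equiv.Perm (Fin n))).Pairwise (NeighborSep n k) → #F ≤ B) :
    permP n k ≤ B :=
  csSup_le' <| by
    rintro m ⟨F, hF, rfl⟩
    exact h F hF

theorem permP_succ_le {n c : ℕ} (hc : 2 ≤ c) : permP n (c + 1) ≤ 2 ^ n * n.choose (n / c) := by
  refine permP_le_of_forall_card_le fun F hF => ?_
  calc #F ≤ #(univ ×ˢ powersetCard (n / c) univ : Finset ((Fin n → Bool) × Finset (Fin n))) := by
        refine card_le_card_of_injOn (Equiv.Perm.blockSignature c) (fun π _ => ?_)
          (fun π hπ σ hσ h => ?_)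
        · simp [Equiv.Perm.card_blockSignature_snd]
        · by_contra hne
          exact Equiv.Perm.not_neighborSep_of_blockSignature_eq hc h (hF hπ hσ hne)
    _ = 2 ^ n * n.choose (n / c) := by simp [card_powersetCard]

theorem Nat.choose_mul_pow_le_one_add_pow (n m : ℕ) {β : ℝ} (hβ : 0 ≤ β) :
    (n.choose m : ℝ) * β ^ m ≤ (1 + β) ^ n := by
  rcases le_or_gt m n with hmn | hmn
  · rw [add_comm, add_pow]
    refine le_of_eq_of_le (by ring) (single_le_sum (f := fun j => β ^ j * 1 ^ (n - j) *
      (n.choose j : ℝ)) (fun j _ => by positivity) (mem_range.mpr (Nat.lt_succ_of_le hmn)))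
  · simp only [Nat.choose_eq_zero_of_lt hmn, Nat.cast_zero, zero_mul]
    positivity

theorem Nat.choose_div_le_pow {n c : ℕ} {β r : ℝ} (hβ : 0 < β) (hr : 1 ≤ r)
    (hβr : β⁻¹ ≤ r ^ c) : (n.choose (n / c) : ℝ) ≤ ((1 + β) * r) ^ n := by
  calc (n.choose (n / c) : ℝ) = n.choose (n / c) * β ^ (n / c) * β⁻¹ ^ (n / c) := by
        rw [mul_assoc, ← mul_pow, mul_inv_cancel₀ hβ.ne', one_pow, mul_one]
    _ ≤ (1 + β) ^ n * (r ^ c) ^ (n / c) := by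
        gcongr
        exact Nat.choose_mul_pow_le_one_add_pow n _ hβ.le
    _ ≤ (1 + β) ^ n * r ^ n := by
        rw [← pow_mul]
        gcongr
        exact Nat.mul_div_le n c
    _ = ((1 + β) * r) ^ n := (mul_pow _ _ _).symm

theorem permP_limsup_le_two :
    ∀ ε : ℝ, 0 < ε → ∃ K : ℕ, ∀ k : ℕ, K ≤ k → ∀ n : ℕ, 1 ≤ n →
      (permP n k : ℝ) ≤ (2 + ε) ^ n := by
  intro ε hε
  set β := min ε 1 / 8 with hβ
  have hβ0 : 0 < β := by positivity
  have hbase : 2 * ((1 + β) * (1 + β)) ≤ 2 + ε := by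
    nlinarith [min_le_left ε 1, min_le_right ε 1]
  obtain ⟨c, hc⟩ := pow_unbounded_of_one_lt β⁻¹ (by linarith : 1 < 1 + β)
  refine ⟨c + 3, fun k hk n _ => ?_⟩
  obtain ⟨c', rfl⟩ : ∃ c', k = c' + 1 := ⟨k - 1, by omega⟩
  have hβr : β⁻¹ ≤ (1 + β) ^ c' := hc.le.trans (pow_le_pow_right₀ (by linarith) (by omega))
  calc (permP n (c' + 1) : ℝ) ≤ 2 ^ n * n.choose (n / c') := by
        exact_mod_cast permP_succ_le (by omega)
    _ ≤ 2 ^ n * ((1 + β) * (1 + β)) ^ n := by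
        gcongr
        exact Nat.choose_div_le_pow hβ0 (by linarith) hβr
    _ = (2 * ((1 + β) * (1 + β))) ^ n := (mul_pow _ _ _).symm
    _ ≤ (2 + ε) ^ n := by gcongr
end

section
/- For every even integer n ≥ 4, there exist three perfect matchings M₁, M₂, M₃ of the complete graph K_n on n vertices such that each of the three pairwise unions M₁ ∪ M₂, M₁ ∪ M₃ and M₂ ∪ M₃ is a Hamiltonian cycle of K_n. -/
open SimpleGraph

/-- A simple graph on `Fin n` is a perfect matching if every vertex has a unique neighbor. -/
def IsPerfectMatchingGraph {n : ℕ} (M : SimpleGraph (Fin n)) : Prop :=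
  ∀ v : Fin n, ∃! w : Fin n, M.Adj v w

/-- `G` is (the edge graph of) a Hamiltonian cycle of the complete graph on `Fin n`:
it is the image of the cycle graph under a relabelling of the vertices. -/
def IsHamCycleGraph {n : ℕ} (G : SimpleGraph (Fin n)) : Prop :=
  ∃ σ : Fin n ≃ Fin n, G = (cycleGraph n).map σ.toEmbedding

/-!
Write `n = m + 2` and let `q = m + 1`, which is odd, so the vertices can be labelled by
`ZMod q ∪ {∞}`. The `r`-th round of the round-robin tournament matches `∞` with `r` and `y`
with `2r - y`. For a unit `d`, the rounds `r` and `r + d` alternate along the closed walk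
`∞, r, r + 2d, r - 2d, r + 4d, …, r + d`, which visits all `q + 1` vertices because the
offsets `0, 2, -2, 4, …, 1` of its finite part are distinct modulo `q`. The rounds `0, 1, 2`
have pairwise differences `1, 2, 1`, all units since `q` is odd.
-/

open Function

theorem Function.Involutive.eq_apply_iff_of_alternating {V ι : Type*} [AddGroup ι] {f : V → V}
    (hf : Involutive f) {σ : ι → V} (hσ : Injective σ) {P : ι → Prop} {s : ι}
    (hstep : ∀ i, P i → f (σ i) = σ (i + s)) (hP : ∀ i, ¬P i → P (i - s)) (i j : ι) :
    σ j = f (σ i) ↔ (P i ∧ j = i + s) ∨ (P j ∧ i = j + s) := by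
  constructor
  · intro h
    by_cases hi : P i
    · exact Or.inl ⟨hi, hσ (h.trans (hstep i hi))⟩
    · have hback : f (σ i) = σ (i - s) := by
        rw [← hf (σ (i - s)), hstep _ (hP i hi), sub_add_cancel]
      obtain rfl := hσ (h.trans hback)
      exact Or.inr ⟨hP i hi, (sub_add_cancel i s).symm⟩
  · rintro (⟨hi, rfl⟩ | ⟨hj, hi⟩)
    · exact (hstep i hi).symm
    · rw [hi, ← hstep j hj, hf]

namespace SimpleGraph

variable {V : Type*}

def involutionGraph (f : V → V) : SimpleGraph V :=
  fromRel fun u v => v = f u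

theorem involutionGraph_adj {f : V → V} (hf : Involutive f) (hfix : ∀ x, f x ≠ x) {u v : V} :
    (involutionGraph f).Adj u v ↔ v = f u := by
  rw [involutionGraph, fromRel_adj]
  constructor
  · rintro ⟨-, h | rfl⟩
    exacts [h, (hf v).symm]
  · rintro rfl
    exact ⟨(hfix u).symm, Or.inl rfl⟩

theorem isPerfectMatchingGraph_comap_involutionGraph {n : ℕ} {f : V → V} (hf : Involutive f)
    (hfix : ∀ x, f x ≠ x) (e : Fin n ≃ V) :
    IsPerfectMatchingGraph ((involutionGraph f).comap e) := by
  intro v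
  simp only [comap_adj, involutionGraph_adj hf hfix]
  exact e.bijective.existsUnique _

theorem isHamCycleGraph_comap_map_cycleGraph {n : ℕ} (σ e : Fin n ≃ V) :
    IsHamCycleGraph (((cycleGraph n).map σ.toEmbedding).comap e) :=
  ⟨σ.trans e.symm, by rw [← e.coe_toEmbedding, ← map_symm, map_map]; rfl⟩

theorem involutionGraph_sup_eq_map_cycleGraph {m : ℕ} (hm : Even m) {f g : V → V}
    (hf : Involutive f) (hg : Involutive g) (hffix : ∀ x, f x ≠ x) (hgfix : ∀ x, g x ≠ x)
    (σ : Fin (m + 2) ≃ V) (hfσ : ∀ i : Fin (m + 2), Even i.val → f (σ i) = σ (i + 1))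
    (hgσ : ∀ i : Fin (m + 2), Odd i.val → g (σ i) = σ (i + 1)) :
    involutionGraph f ⊔ involutionGraph g = (cycleGraph (m + 2)).map σ.toEmbedding := by
  have hpred (i : Fin (m + 2)) : (i - 1).val = if i = 0 then m + 1 else i.val - 1 :=
    Fin.coe_sub_one i
  have hf_pred (i : Fin (m + 2)) (hi : ¬Even i.val) : Even (i - 1).val := by
    rw [hpred, if_neg (by rintro rfl; exact hi (by simp))]
    exact Nat.Odd.sub_odd (Nat.not_even_iff_odd.mp hi) odd_one
  have hg_pred (i : Fin (m + 2)) (hi : ¬Odd i.val) : Odd (i - 1).val := by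
    rw [hpred]
    split_ifs with h0
    · exact hm.add_one
    · exact Nat.Even.sub_odd (Nat.one_le_iff_ne_zero.mpr (Fin.val_ne_zero_iff.mpr h0))
        (Nat.not_odd_iff_even.mp hi) odd_one
  ext u v
  obtain ⟨i, rfl⟩ := σ.surjective u
  obtain ⟨j, rfl⟩ := σ.surjective v
  have hcycle : ((cycleGraph (m + 2)).map σ.toEmbedding).Adj (σ i) (σ j) ↔
      (cycleGraph (m + 2)).Adj i j :=
    map_adj_apply
  rw [sup_adj, involutionGraph_adj hf hffix, involutionGraph_adj hg hgfix,
    hf.eq_apply_iff_of_alternating σ.injective hfσ hf_pred,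
    hg.eq_apply_iff_of_alternating σ.injective hgσ hg_pred, hcycle, cycleGraph_adj,
    sub_eq_iff_eq_add', sub_eq_iff_eq_add']
  simp only [← Nat.not_even_iff_odd]
  tauto

end SimpleGraph

section RoundRobin

variable {R : Type*} [CommRing R] [DecidableEq R]

def roundRobin (r : R) : Option R → Option R
  | none => some r
  | some y => if y = r then none else some (2 * r - y)

@[simp] theorem roundRobin_none (r : R) : roundRobin r none = some r := rfl

@[simp] theorem roundRobin_some_self (r : R) : roundRobin r (some r) = none := if_pos rfl

theorem roundRobin_some_of_ne {r y : R} (h : y ≠ r) : roundRobin r (some y) = some (2 * r - y) :=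
  if_neg h

theorem roundRobin_involutive (r : R) : Involutive (roundRobin r) := by
  rintro (_ | y)
  · simp
  · by_cases h : y = r
    · simp [h]
    · have h' : 2 * r - y ≠ r := fun h' => h (by linear_combination -h')
      rw [roundRobin_some_of_ne h, roundRobin_some_of_ne h', sub_sub_cancel]

theorem roundRobin_ne_self (h2 : IsUnit (2 : R)) (r : R) (x : Option R) : roundRobin r x ≠ x := by
  rcases x with _ | y
  · simp
  · by_cases h : y = r
    · simp [h]
    · rw [roundRobin_some_of_ne h, Ne, Option.some_inj]
      intro h'
      exact h (h2.mul_right_inj.mp (by linear_combination -h'))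

end RoundRobin

section RoundRobinCycle

-- The offset `1 - j` of an odd position `j` is represented by `m + 2 - j`, so that all offsets
-- lie in `[1, m + 1]` and distinct positions have distinct integer offsets.
def cycleOffset (m j : ℕ) : ℤ := if Even j then j else m + 2 - j

variable {m : ℕ}

theorem intCast_cycleOffset (j : ℕ) :
    (cycleOffset m j : ZMod (m + 1)) = if Even j then (j : ZMod (m + 1)) else 1 - j := by
  have hq : ((m : ZMod (m + 1)) + 1 = 0) := by exact_mod_cast ZMod.natCast_self (m + 1)
  unfold cycleOffset
  split_ifs
  · push_cast; rfl
  · push_cast; linear_combination hq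

theorem intCast_cycleOffset_injOn (hm : Even m) :
    Set.InjOn (fun j => (cycleOffset m j : ZMod (m + 1))) (Set.Icc 1 (m + 1)) := by
  intro j hj k hk h
  rw [ZMod.intCast_eq_intCast_iff_dvd_sub] at h
  rw [Set.mem_Icc] at hj hk
  rw [Nat.even_iff] at hm
  unfold cycleOffset at h
  have hdiff := Int.eq_zero_of_abs_lt_dvd h (by
    rw [abs_lt]; simp only [Nat.even_iff]; split_ifs <;> constructor <;> push_cast <;> omega)
  simp only [Nat.even_iff] at hdiff
  split_ifs at hdiff <;> omega

/-- The walk `∞, r, r + 2d, r - 2d, r + 4d, …, r + d` along which `roundRobin r` and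
`roundRobin (r + d)` alternate. -/
def roundRobinCycle (r d : ZMod (m + 1)) (p : Fin (m + 2)) : Option (ZMod (m + 1)) :=
  if p = 0 then none else some (r + cycleOffset m p * d)

theorem ZMod.natCast_mul_ne_zero {q j : ℕ} (hj0 : j ≠ 0) (hj : j < q) {d : ZMod q}
    (hd : IsUnit d) : (j : ZMod q) * d ≠ 0 := by
  rw [Ne, hd.mul_left_eq_zero, ZMod.natCast_eq_zero_iff]
  exact Nat.not_dvd_of_pos_of_lt (Nat.pos_of_ne_zero hj0) hj

variable {r d : ZMod (m + 1)}

theorem roundRobinCycle_injective (hm : Even m) (hd : IsUnit d) :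
    Injective (roundRobinCycle r d) := by
  intro p p' h
  by_cases hp : p = 0 <;> by_cases hp' : p' = 0
  · exact hp.trans hp'.symm
  · simp [roundRobinCycle, hp, hp'] at h
  · simp [roundRobinCycle, hp, hp'] at h
  · simp only [roundRobinCycle, hp, hp', if_false, Option.some_inj, add_right_inj,
      hd.mul_left_inj] at h
    have hp := Fin.val_ne_zero_iff.mpr hp
    have hp' := Fin.val_ne_zero_iff.mpr hp'
    exact Fin.ext (intCast_cycleOffset_injOn hm ⟨by omega, by omega⟩ ⟨by omega, by omega⟩ h)

theorem roundRobinCycle_of_ne_zero {p : Fin (m + 2)} (hp : p ≠ 0) :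
    roundRobinCycle r d p =
      some (r + (if Even p.val then (p.val : ZMod (m + 1)) else 1 - p.val) * d) := by
  rw [roundRobinCycle, if_neg hp, intCast_cycleOffset]

theorem roundRobin_roundRobinCycle_of_even (hm : Even m) (hd : IsUnit d) (p : Fin (m + 2))
    (hp : Even p.val) : roundRobin r (roundRobinCycle r d p) = roundRobinCycle r d (p + 1) := by
  have hlast : p ≠ Fin.last (m + 1) := by
    rintro rfl; exact Nat.not_even_iff_odd.mpr hm.add_one hp
  have hsucc : (p + 1).val = p.val + 1 := by rw [Fin.val_add_one, if_neg hlast]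
  have hsucc0 : p + 1 ≠ 0 := by rw [Ne, Fin.ext_iff, hsucc]; simp
  rw [roundRobinCycle_of_ne_zero hsucc0, hsucc, if_neg (by simpa [Nat.even_add_one] using hp)]
  by_cases hp0 : p = 0
  · simp [hp0, roundRobinCycle]
  · have hne := ZMod.natCast_mul_ne_zero (Fin.val_ne_zero_iff.mpr hp0) (Fin.val_lt_last hlast) hd
    rw [roundRobinCycle_of_ne_zero hp0, if_pos hp, roundRobin_some_of_ne (by simpa using hne)]
    push_cast
    ring_nf

theorem roundRobin_add_roundRobinCycle_of_odd (hd : IsUnit d) (p : Fin (m + 2))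
    (hp : Odd p.val) :
    roundRobin (r + d) (roundRobinCycle r d p) = roundRobinCycle r d (p + 1) := by
  have hp0 : p ≠ 0 := by rintro rfl; simp at hp
  rw [roundRobinCycle_of_ne_zero hp0, if_neg (Nat.not_even_iff_odd.mpr hp)]
  by_cases hlast : p = Fin.last (m + 1)
  · have hq : ((m : ZMod (m + 1)) + 1 = 0) := by exact_mod_cast ZMod.natCast_self (m + 1)
    have hend : r + (1 - (p.val : ZMod (m + 1))) * d = r + d := by
      rw [hlast, Fin.val_last]; push_cast; linear_combination (-d) * hq
    rw [hend, roundRobin_some_self, hlast, Fin.last_add_one, roundRobinCycle, if_pos rfl]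
  · have hsucc : (p + 1).val = p.val + 1 := by rw [Fin.val_add_one, if_neg hlast]
    have hsucc0 : p + 1 ≠ 0 := by rw [Ne, Fin.ext_iff, hsucc]; simp
    have hne := ZMod.natCast_mul_ne_zero (Fin.val_ne_zero_iff.mpr hp0) (Fin.val_lt_last hlast) hd
    rw [roundRobinCycle_of_ne_zero hsucc0, hsucc, if_pos hp.add_one,
      roundRobin_some_of_ne (fun h => hne (by linear_combination -h))]
    push_cast
    ring_nf

end RoundRobinCycle

section RoundRobinMatching

variable {m : ℕ}

noncomputable def roundRobinCycleEquiv (hm : Even m) (r : ZMod (m + 1)) {d : ZMod (m + 1)}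
    (hd : IsUnit d) : Fin (m + 2) ≃ Option (ZMod (m + 1)) :=
  Equiv.ofBijective (roundRobinCycle r d)
    ((Fintype.bijective_iff_injective_and_card _).mpr ⟨roundRobinCycle_injective hm hd, by simp⟩)

theorem ZMod.isUnit_two_of_odd {q : ℕ} (hq : Odd q) : IsUnit (2 : ZMod q) := by
  exact_mod_cast (ZMod.isUnit_iff_coprime 2 q).mpr (Nat.coprime_two_left.mpr hq)

theorem roundRobin_sup_eq_map_cycleGraph (hm : Even m) (r : ZMod (m + 1)) {d : ZMod (m + 1)}
    (hd : IsUnit d) :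
    involutionGraph (roundRobin r) ⊔ involutionGraph (roundRobin (r + d)) =
      (cycleGraph (m + 2)).map (roundRobinCycleEquiv hm r hd).toEmbedding :=
  have h2 := ZMod.isUnit_two_of_odd hm.add_one
  involutionGraph_sup_eq_map_cycleGraph hm (roundRobin_involutive _) (roundRobin_involutive _)
    (roundRobin_ne_self h2 _) (roundRobin_ne_self h2 _) _
    (roundRobin_roundRobinCycle_of_even hm hd) (roundRobin_add_roundRobinCycle_of_odd hd)

noncomputable def roundRobinMatching (m : ℕ) (r : ZMod (m + 1)) : SimpleGraph (Fin (m + 2)) :=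
  (involutionGraph (roundRobin r)).comap (Fintype.equivFinOfCardEq (by simp)).symm

theorem isPerfectMatchingGraph_roundRobinMatching (hm : Even m) (r : ZMod (m + 1)) :
    IsPerfectMatchingGraph (roundRobinMatching m r) :=
  isPerfectMatchingGraph_comap_involutionGraph (roundRobin_involutive r)
    (roundRobin_ne_self (ZMod.isUnit_two_of_odd hm.add_one) r) _

theorem isHamCycleGraph_roundRobinMatching_sup (hm : Even m) (r : ZMod (m + 1))
    {d : ZMod (m + 1)} (hd : IsUnit d) :
    IsHamCycleGraph (roundRobinMatching m r ⊔ roundRobinMatching m (r + d)) := by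
  change IsHamCycleGraph
    ((involutionGraph (roundRobin r) ⊔ involutionGraph (roundRobin (r + d))).comap _)
  rw [roundRobin_sup_eq_map_cycleGraph hm r hd]
  exact isHamCycleGraph_comap_map_cycleGraph _ _

end RoundRobinMatching

theorem three_matchings_pairwise_ham_cycles (n : ℕ) (hn : 4 ≤ n) (hne : Even n) :
    ∃ M₁ M₂ M₃ : SimpleGraph (Fin n),
      IsPerfectMatchingGraph M₁ ∧ IsPerfectMatchingGraph M₂ ∧ IsPerfectMatchingGraph M₃ ∧
      IsHamCycleGraph (M₁ ⊔ M₂) ∧ IsHamCycleGraph (M₁ ⊔ M₃) ∧ IsHamCycleGraph (M₂ ⊔ M₃) := by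
  obtain ⟨m, rfl⟩ : ∃ m, n = m + 2 := ⟨n - 2, by omega⟩
  have hm : Even m := by simpa [Nat.even_add] using hne
  refine ⟨roundRobinMatching m 0, roundRobinMatching m 1, roundRobinMatching m 2,
    isPerfectMatchingGraph_roundRobinMatching hm 0, isPerfectMatchingGraph_roundRobinMatching hm 1,
    isPerfectMatchingGraph_roundRobinMatching hm 2, ?_, ?_, ?_⟩
  · simpa using isHamCycleGraph_roundRobinMatching_sup hm 0 isUnit_one
  · simpa using isHamCycleGraph_roundRobinMatching_sup hm 0 (ZMod.isUnit_two_of_odd hm.add_one)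
  · simpa [one_add_one_eq_two] using isHamCycleGraph_roundRobinMatching_sup hm 1 isUnit_one
end

section
/- For every even integer n ≥ 4, P(n,n) = 3n/2. -/
/-!
Upper bound: count the pairs `(π, v)` with `π ∈ F` and `v` at an end of `π`. Every `π` has two
ends. If `v` is an end of both `π` and `σ`, the pair separating them consists of `v` and the far
end of one of the two, which is then the neighbour of `v` in the other; in particular distinct
such permutations have distinct far ends. So on `{π ∈ F | v is an end of π}` the relation "the far
end of `σ` is the neighbour of `v` in `π`" is a tournament in which every `π` beats at most one
`σ`, and there are at most three such `π`. Hence `2 |F| ≤ 3 n`.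

Lower bound: cutting a Hamiltonian cycle `C` of `Kₙ` at an edge `e` gives a permutation whose ends
are the endpoints of `e`, so the cuts `(C, e)` and `(C', e')` are `n`-neighbor separated as soon as
`e'` is an edge of `C` other than `e`. For even `n` let `A = {2i, 2i+1}` and `B = {2i+1, 2i+2}`
(mod `n`); there is a third perfect matching `M` such that `A ∪ B`, `A ∪ M` and `B ∪ M` are
Hamiltonian cycles. Cutting `A ∪ B` at the edges of `A`, `A ∪ M` at those of `M` and `B ∪ M` at
those of `B` gives `3n/2` pairwise separated permutations, since `A ⊆ A ∪ M`, `M ⊆ B ∪ M` and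
`B ⊆ A ∪ B`.
-/

open Equiv Finset

theorem Finset.card_le_three_of_tournament {α : Type*} (S : Finset α) (T : α → α → Prop)
    (htotal : ∀ x ∈ S, ∀ y ∈ S, x ≠ y → T x y ∨ T y x)
    (hfun : ∀ x ∈ S, ∀ y ∈ S, ∀ z ∈ S, T x y → T x z → y = z) : #S ≤ 3 := by
  classical
  set P := S.offDiag.filter fun p => T p.1 p.2
  have hP : #P ≤ #S := by
    refine card_le_card_of_injOn Prod.fst (fun p hp => (mem_offDiag.mp (mem_filter.mp hp).1).1) ?_
    intro p hp q hq hpq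
    simp only [P, coe_filter, Set.mem_ofPred_eq, mem_offDiag] at hp hq
    rw [← hpq] at hq
    exact Prod.ext hpq (hfun _ hp.1.1 _ hp.1.2.1 _ hq.1.2.1 hp.2 hq.2)
  have hcover : S.offDiag ⊆ P ∪ P.image Prod.swap := by
    rintro ⟨x, y⟩ hxy
    obtain ⟨hx, hy, hne⟩ := mem_offDiag.mp hxy
    rcases htotal x hx y hy hne with h | h
    · exact mem_union_left _ (mem_filter.mpr ⟨hxy, h⟩)
    · exact mem_union_right _ (mem_image.mpr
        ⟨(y, x), mem_filter.mpr ⟨mem_offDiag.mpr ⟨hy, hx, hne.symm⟩, h⟩, rfl⟩)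
  have hcard : #S * #S - #S ≤ 2 * #S := by
    calc #S * #S - #S = #S.offDiag := (offDiag_card S).symm
      _ ≤ #P + #(P.image Prod.swap) := (card_le_card hcover).trans (card_union_le _ _)
      _ ≤ 2 * #S := by have := card_image_le (s := P) (f := Prod.swap); omega
  by_contra! h
  have : 4 * #S ≤ #S * #S := Nat.mul_le_mul_right _ h
  omega

theorem Fin.val_add_one_eq_ite {n : ℕ} [NeZero n] (i : Fin n) :
    (i + 1).val = if i.val + 1 = n then 0 else i.val + 1 := by
  rw [Fin.val_add, Fin.val_one']
  rcases Nat.lt_or_ge 1 n with h | h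
  · rw [Nat.mod_eq_of_lt h]
    split_ifs with h'
    · rw [h', Nat.mod_self]
    · exact Nat.mod_eq_of_lt (by omega)
  · have := i.isLt
    have : n = 1 := by have := NeZero.ne n; omega
    subst this; simp

theorem Fin.val_add_one_of_add_one_ne_zero {n : ℕ} [NeZero n] {a : Fin n} (h : a + 1 ≠ 0) :
    (a + 1).val = a.val + 1 := by
  have := Fin.val_add_one_eq_ite a
  split_ifs at this
  · exact absurd (Fin.ext (by rw [this, Fin.val_zero])) h
  · exact this

namespace NeighborSep

variable {n k : ℕ}

theorem symm {π σ : Perm (Fin n)} (h : NeighborSep n k π σ) : NeighborSep n k σ π := by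
  obtain ⟨x, y, h | h⟩ := h
  exacts [⟨x, y, Or.inr h⟩, ⟨x, y, Or.inl h⟩]

theorem irrefl (hk : k ≠ 2) (π : Perm (Fin n)) : ¬NeighborSep n k π π := by
  rintro ⟨x, y, ⟨h₁, h₂⟩ | ⟨h₁, h₂⟩⟩ <;> omega

theorem exists_pairwise_finset_card_eq {ι : Type*} [Fintype ι] (hk : k ≠ 2)
    {f : ι → Perm (Fin n)} (hf : Pairwise fun i j => NeighborSep n k (f i) (f j)) :
    ∃ F : Finset (Perm (Fin n)), (F : Set (Perm (Fin n))).Pairwise (NeighborSep n k) ∧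
      #F = Fintype.card ι := by
  classical
  have hinj : Function.Injective f := fun i j hij => by
    by_contra hne
    have h : NeighborSep n k (f i) (f j) := hf hne
    exact irrefl hk _ (hij ▸ h)
  refine ⟨univ.image f, ?_, card_image_of_injective _ hinj⟩
  simp only [coe_image, coe_univ, Set.image_univ]
  rintro _ ⟨i, rfl⟩ _ ⟨j, rfl⟩ hij
  exact hf fun h => hij (congrArg f h)

def posDist (π : Perm (Fin n)) (x y : Fin n) : ℕ := ((π.symm x : ℤ) - (π.symm y : ℤ)).natAbs

theorem posDist_comm (π : Perm (Fin n)) (x y : Fin n) : posDist π x y = posDist π y x := by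
  unfold posDist; omega

def IsEnd (π : Perm (Fin n)) (v : Fin n) : Prop := (π.symm v).val = 0 ∨ (π.symm v).val = n - 1

theorem IsEnd.eq_of_posDist_eq {π : Perm (Fin n)} {v u u' : Fin n} (hv : IsEnd π v)
    (h : posDist π v u = posDist π v u') : u = u' := by
  have := (π.symm u).isLt
  have := (π.symm u').isLt
  unfold IsEnd at hv
  unfold posDist at h
  exact π.symm.injective (Fin.ext (by omega))

theorem IsEnd.eq_or_eq_of_posDist_eq_sub_one {π : Perm (Fin n)} {v x y : Fin n} (hv : IsEnd π v)
    (h : posDist π x y = n - 1) : x = v ∨ y = v := by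
  have := (π.symm x).isLt
  have := (π.symm y).isLt
  unfold IsEnd at hv
  unfold posDist at h
  rcases (by omega : (π.symm x).val = (π.symm v).val ∨ (π.symm y).val = (π.symm v).val)
    with h' | h'
  exacts [.inl (π.symm.injective (Fin.ext h')), .inr (π.symm.injective (Fin.ext h'))]

theorem card_filter_isEnd_le_three (hn : 3 ≤ n) {F : Finset (Perm (Fin n))}
    (hF : (F : Set (Perm (Fin n))).Pairwise (NeighborSep n n)) (v : Fin n)
    [DecidablePred (IsEnd · v)] : #{π ∈ F | IsEnd π v} ≤ 3 := by
  set S := {π ∈ F | IsEnd π v}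
  have hS : ∀ π ∈ S, π ∈ F ∧ IsEnd π v := fun π hπ => mem_filter.mp hπ
  -- `T π σ`: the far end of `σ` is next to `v` in `π`
  let T (π σ : Perm (Fin n)) : Prop := ∃ u, posDist σ v u = n - 1 ∧ posDist π v u = 1
  have hT : ∀ π ∈ S, ∀ σ ∈ S, π ≠ σ → T π σ ∨ T σ π := by
    have key : ∀ π σ : Perm (Fin n), IsEnd σ v → ∀ x y,
        posDist π x y = 1 → posDist σ x y = n - 1 → T π σ := by
      intro π σ hσ x y h₁ h₂
      rcases hσ.eq_or_eq_of_posDist_eq_sub_one h₂ with rfl | rfl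
      · exact ⟨y, h₂, h₁⟩
      · exact ⟨x, posDist_comm σ _ _ ▸ h₂, posDist_comm π _ _ ▸ h₁⟩
    intro π hπ σ hσ hne
    obtain ⟨x, y, ⟨h₁, h₂⟩ | ⟨h₁, h₂⟩⟩ := hF (hS π hπ).1 (hS σ hσ).1 hne
    exacts [.inl (key π σ (hS σ hσ).2 x y h₁ h₂), .inr (key σ π (hS π hπ).2 x y h₁ h₂)]
  refine card_le_three_of_tournament S T hT ?_
  rintro π hπ σ hσ σ' hσ' ⟨u, hσu, hπu⟩ ⟨u', hσ'u', hπu'⟩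
  obtain rfl : u = u' := (hS π hπ).2.eq_of_posDist_eq (hπu.trans hπu'.symm)
  have not_T : ∀ τ ∈ S, ∀ τ' ∈ S, posDist τ v u = n - 1 → posDist τ' v u = n - 1 → ¬T τ τ' := by
    rintro τ hτ τ' hτ' hτu hτ'u ⟨u'', hτ'u'', hτu''⟩
    obtain rfl : u = u'' := (hS τ' hτ').2.eq_of_posDist_eq (hτ'u.trans hτ'u''.symm)
    omega
  by_contra hne
  rcases hT σ hσ σ' hσ' hne with h | h
  exacts [not_T σ hσ σ' hσ' hσu hσ'u' h, not_T σ' hσ' σ hσ hσ'u' hσu h]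

theorem card_le_three_mul_div_two (hn : 3 ≤ n) {F : Finset (Perm (Fin n))}
    (hF : (F : Set (Perm (Fin n))).Pairwise (NeighborSep n n)) : #F ≤ 3 * n / 2 := by
  classical
  have two_ends (π : Perm (Fin n)) : 2 ≤ #(univ.bipartiteAbove IsEnd π) := by
    refine one_lt_card.mpr ⟨π ⟨0, by omega⟩, ?_, π ⟨n - 1, by omega⟩, ?_, ?_⟩
    · simp [mem_bipartiteAbove, IsEnd]
    · simp [mem_bipartiteAbove, IsEnd]
    · simp only [ne_eq, EmbeddingLike.apply_eq_iff_eq, Fin.mk.injEq]; omega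
  have h := card_nsmul_le_card_nsmul (R := ℕ) IsEnd (fun π _ => two_ends π)
    (fun v _ => card_filter_isEnd_le_three hn hF v)
  simp only [smul_eq_mul, card_univ, Fintype.card_fin] at h
  omega

section Cutting

variable [NeZero n]

/-- The cyclic arrangement `c 0, c 1, …, c (n-1)` cut open between positions `t` and `t + 1`:
position `j` of `cutAt c t` holds `c (t + 1 + j)`. -/
def cutAt (c : Perm (Fin n)) (t : Fin n) : Perm (Fin n) := (Equiv.addLeft (t + 1)).trans c

theorem cutAt_symm_apply (c : Perm (Fin n)) (t x : Fin n) :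
    (cutAt c t).symm x = c.symm x - (t + 1) := by
  change -(t + 1) + c.symm x = _
  exact neg_add_eq_sub _ _

def edge (c : Perm (Fin n)) (i : Fin n) : Sym2 (Fin n) := s(c i, c (i + 1))

theorem neighborSep_cutAt {c c' : Perm (Fin n)} {t t' w : Fin n} (hwt : w ≠ t)
    (h : edge c w = edge c' t') : NeighborSep n n (cutAt c t) (cutAt c' t') := by
  have hend : ((t' - (t' + 1) : Fin n) : ℕ) + 1 = n := by
    have := Fin.val_add_one_eq_ite (t' - (t' + 1))
    rw [show t' - (t' + 1) + 1 = 0 by abel, Fin.val_zero] at this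
    split_ifs at this with h'
    exact h'
  have hadj : ((w + 1 - (t + 1) : Fin n) : ℕ) = ((w - (t + 1) : Fin n) : ℕ) + 1 := by
    rw [show w + 1 - (t + 1) = w - (t + 1) + 1 by abel]
    refine Fin.val_add_one_of_add_one_ne_zero ?_
    rw [show w - (t + 1) + 1 = w - t by abel]
    exact sub_ne_zero.mpr hwt
  -- `c' (t' + 1)` and `c' t'` are the two ends of `cutAt c' t'` and adjacent in `cutAt c t`.
  refine ⟨c' (t' + 1), c' t', Or.inl ⟨?_, ?_⟩⟩
  · rcases Sym2.eq_iff.mp h with ⟨h₀, h₁⟩ | ⟨h₀, h₁⟩ <;>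
      simp only [← h₀, ← h₁, cutAt_symm_apply, symm_apply_apply] <;> omega
  · simp only [cutAt_symm_apply, symm_apply_apply, sub_self, Fin.val_zero]
    omega

theorem edge_eq_of_apply_eq {c c' : Perm (Fin n)} {w t : Fin n} (h₀ : c w = c' t)
    (h₁ : c (w + 1) = c' (t + 1)) : edge c w = edge c' t := by
  rw [edge, edge, h₀, h₁]

theorem edge_eq_of_apply_eq_swap {c c' : Perm (Fin n)} {w t : Fin n} (h₀ : c w = c' (t + 1))
    (h₁ : c (w + 1) = c' t) : edge c w = edge c' t := by
  rw [edge, edge, h₀, h₁, Sym2.eq_swap]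

end Cutting

/-- `A ∪ M` as the cyclic sequence `0, 3, 2, 5, 4, …, n-3, n-4, n-2, n-1, 1`: its edges at odd
positions form `A`, those at even positions form `M`. -/
def seq₁ (n j : ℕ) : ℕ :=
  if j = n - 1 then 1 else if j = n - 2 then n - 1 else if j = n - 3 then n - 2
  else j + 2 * (j % 2)

/-- `B ∪ M` as the cyclic sequence `0, 3, 4, 7, 8, …, n-2, …, 6, 5, 2, 1, n-1`: its edges at odd
positions form `B`, those at even positions form `M`. -/
def seq₂ (n j : ℕ) : ℕ :=
  if j = n - 1 then n - 1
  else if j < n / 2 then (if j = n / 2 - 1 then n - 2 else 2 * j + j % 2)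
  else 2 * (n - 1 - j) - 2 + (n - 1 - j) % 2

noncomputable def permOfNat (f : ℕ → ℕ) (hlt : ∀ j < n, f j < n)
    (hinj : ∀ j < n, ∀ k < n, f j = f k → j = k) : Perm (Fin n) :=
  Equiv.ofBijective (fun j => ⟨f j, hlt j j.2⟩) (Function.Injective.bijective_of_finite
    fun j k h => Fin.ext (hinj j j.2 k k.2 (Fin.mk.inj h)))

theorem permOfNat_val (f : ℕ → ℕ) (hlt : ∀ j < n, f j < n)
    (hinj : ∀ j < n, ∀ k < n, f j = f k → j = k) (j : Fin n) :
    (permOfNat f hlt hinj j).val = f j := rfl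

noncomputable def cycle₁ (hn : 4 ≤ n) (he : Even n) : Perm (Fin n) :=
  permOfNat (seq₁ n) (fun j hj => by unfold seq₁; split_ifs <;> omega)
    (fun j hj k hk h => by obtain ⟨m, rfl⟩ := he; unfold seq₁ at h; split_ifs at h <;> omega)

noncomputable def cycle₂ (hn : 4 ≤ n) (he : Even n) : Perm (Fin n) :=
  permOfNat (seq₂ n) (fun j hj => by unfold seq₂; split_ifs <;> omega)
    (fun j hj k hk h => by obtain ⟨m, rfl⟩ := he; unfold seq₂ at h; split_ifs at h <;> omega)

section Cycles

variable [NeZero n] (hn : 4 ≤ n) (he : Even n)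

theorem exists_odd_edge_cycle₁_eq (t : Fin n) (ht : Even t.val) :
    ∃ w : Fin n, Odd w.val ∧ edge (cycle₁ hn he) w = edge 1 t := by
  have hn2 := Nat.even_iff.mp he
  have ht2 := Nat.even_iff.mp ht
  have := t.isLt
  rcases (by omega : t.val = 0 ∨ t.val = n - 2 ∨ (2 ≤ t.val ∧ t.val + 4 ≤ n)) with h | h | h <;>
  [refine ⟨⟨n - 1, by omega⟩, ?_, edge_eq_of_apply_eq_swap ?_ ?_⟩;
    refine ⟨⟨n - 3, by omega⟩, ?_, edge_eq_of_apply_eq ?_ ?_⟩;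
    refine ⟨⟨t - 1, by omega⟩, ?_, edge_eq_of_apply_eq_swap ?_ ?_⟩]
  all_goals first
    | (simp only [Nat.odd_iff]; omega)
    | exact Fin.ext (by
        simp only [cycle₁, permOfNat_val, Perm.one_apply, Fin.val_add_one_eq_ite, seq₁]
        simp (disch := omega) only [if_pos, if_neg, ite_true]
        all_goals omega)

theorem exists_even_edge_cycle₂_eq (t : Fin n) (ht : Even t.val) :
    ∃ w : Fin n, Even w.val ∧ edge (cycle₂ hn he) w = edge (cycle₁ hn he) t := by
  have hn2 := Nat.even_iff.mp he
  have ht2 := Nat.even_iff.mp ht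
  have := t.isLt
  rcases (by omega : t.val = n - 2 ∨ (t.val = n - 4 ∧ n % 4 = 0) ∨ (t.val = n - 4 ∧ n % 4 = 2) ∨
    (t.val + 6 ≤ n ∧ t.val % 4 = 0) ∨ (t.val + 6 ≤ n ∧ t.val % 4 = 2)) with h | h | h | h | h <;>
  [refine ⟨⟨n - 2, by omega⟩, ?_, edge_eq_of_apply_eq_swap ?_ ?_⟩;
    refine ⟨⟨n / 2 - 2, by omega⟩, ?_, edge_eq_of_apply_eq ?_ ?_⟩;
    refine ⟨⟨n / 2 - 1, by omega⟩, ?_, edge_eq_of_apply_eq_swap ?_ ?_⟩;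
    refine ⟨⟨t / 2, by omega⟩, ?_, edge_eq_of_apply_eq ?_ ?_⟩;
    refine ⟨⟨n - 3 - t / 2, by omega⟩, ?_, edge_eq_of_apply_eq_swap ?_ ?_⟩]
  all_goals first
    | (simp only [Nat.even_iff]; omega)
    | exact Fin.ext (by
        simp only [cycle₁, cycle₂, permOfNat_val, Fin.val_add_one_eq_ite, seq₁, seq₂]
        simp (disch := omega) only [if_pos, if_neg, ite_true]
        all_goals omega)

theorem exists_odd_edge_one_eq (t : Fin n) (ht : Odd t.val) :
    ∃ w : Fin n, Odd w.val ∧ edge 1 w = edge (cycle₂ hn he) t := by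
  have hn2 := Nat.even_iff.mp he
  have ht2 := Nat.odd_iff.mp ht
  have := t.isLt
  rcases (by omega : t.val = n - 1 ∨ t.val + 3 ≤ n / 2 ∨ t.val + 2 = n / 2 ∨
    t.val + 1 = n / 2 ∨ (n / 2 ≤ t.val ∧ t.val + 3 ≤ n)) with h | h | h | h | h <;>
  [refine ⟨⟨n - 1, by omega⟩, ?_, edge_eq_of_apply_eq ?_ ?_⟩;
    refine ⟨⟨2 * t + 1, by omega⟩, ?_, edge_eq_of_apply_eq ?_ ?_⟩;
    refine ⟨⟨2 * t + 1, by omega⟩, ?_, edge_eq_of_apply_eq ?_ ?_⟩;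
    refine ⟨⟨n - 3, by omega⟩, ?_, edge_eq_of_apply_eq_swap ?_ ?_⟩;
    refine ⟨⟨2 * (n - 1 - t) - 3, by omega⟩, ?_, edge_eq_of_apply_eq_swap ?_ ?_⟩]
  all_goals first
    | (simp only [Nat.odd_iff]; omega)
    | exact Fin.ext (by
        simp only [cycle₂, permOfNat_val, Perm.one_apply, Fin.val_add_one_eq_ite, seq₂]
        simp (disch := omega) only [if_pos, if_neg]
        all_goals omega)

theorem neighborSep_cutAt_cycle₁_one {t t' : Fin n} (ht : Even t.val) (ht' : Even t'.val) :
    NeighborSep n n (cutAt (cycle₁ hn he) t) (cutAt 1 t') := by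
  obtain ⟨w, hw, h⟩ := exists_odd_edge_cycle₁_eq hn he t' ht'
  exact neighborSep_cutAt (fun hwt => Nat.not_even_iff_odd.mpr hw (by rwa [hwt])) h

theorem neighborSep_cutAt_cycle₂_cycle₁ {t t' : Fin n} (ht : Odd t.val) (ht' : Even t'.val) :
    NeighborSep n n (cutAt (cycle₂ hn he) t) (cutAt (cycle₁ hn he) t') := by
  obtain ⟨w, hw, h⟩ := exists_even_edge_cycle₂_eq hn he t' ht'
  exact neighborSep_cutAt (fun hwt => Nat.not_even_iff_odd.mpr ht (by rwa [← hwt])) h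

theorem neighborSep_cutAt_one_cycle₂ {t t' : Fin n} (ht : Even t.val) (ht' : Odd t'.val) :
    NeighborSep n n (cutAt 1 t) (cutAt (cycle₂ hn he) t') := by
  obtain ⟨w, hw, h⟩ := exists_odd_edge_one_eq hn he t' ht'
  exact neighborSep_cutAt (fun hwt => Nat.not_even_iff_odd.mpr hw (by rwa [hwt])) h

noncomputable def family : Fin 3 × Fin (n / 2) → Perm (Fin n)
  | (0, r) => cutAt 1 ⟨2 * r, by have := r.isLt; omega⟩
  | (1, r) => cutAt (cycle₁ hn he) ⟨2 * r, by have := r.isLt; omega⟩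
  | (2, r) => cutAt (cycle₂ hn he) ⟨2 * r + 1, by have := r.isLt; omega⟩

theorem pairwise_family :
    Pairwise fun i j => NeighborSep n n (family hn he i) (family hn he j) := by
  rintro ⟨a, r⟩ ⟨b, s⟩ hne
  have same {c : Perm (Fin n)} {t t' : Fin n} (h : t ≠ t') :
      NeighborSep n n (cutAt c t) (cutAt c t') := neighborSep_cutAt h.symm rfl
  fin_cases a <;> fin_cases b <;> simp only [family]
  · exact same (by simpa [Fin.ext_iff] using hne)
  · exact (neighborSep_cutAt_cycle₁_one hn he (even_two_mul _) (even_two_mul _)).symm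
  · exact neighborSep_cutAt_one_cycle₂ hn he (even_two_mul _) (odd_two_mul_add_one _)
  · exact neighborSep_cutAt_cycle₁_one hn he (even_two_mul _) (even_two_mul _)
  · exact same (by simpa [Fin.ext_iff] using hne)
  · exact (neighborSep_cutAt_cycle₂_cycle₁ hn he (odd_two_mul_add_one _) (even_two_mul _)).symm
  · exact (neighborSep_cutAt_one_cycle₂ hn he (even_two_mul _) (odd_two_mul_add_one _)).symm
  · exact neighborSep_cutAt_cycle₂_cycle₁ hn he (odd_two_mul_add_one _) (even_two_mul _)
  · exact same (by simpa [Fin.ext_iff] using hne)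

end Cycles

end NeighborSep

theorem permP_n_n_even (n : ℕ) (hn : 4 ≤ n) (hne : Even n) :
    permP n n = 3 * n / 2 := by
  have : NeZero n := ⟨by omega⟩
  refine IsGreatest.csSup_eq ⟨?_, ?_⟩
  · obtain ⟨F, hF, hcard⟩ :=
      NeighborSep.exists_pairwise_finset_card_eq (by omega) (NeighborSep.pairwise_family hn hne)
    refine ⟨F, hF, ?_⟩
    rw [hcard, Fintype.card_prod, Fintype.card_fin, Fintype.card_fin]
    obtain ⟨m, rfl⟩ := hne
    omega
  · rintro _ ⟨F, hF, rfl⟩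
    exact NeighborSep.card_le_three_mul_div_two (by omega) hF
end

section
/- For every integer n ≥ 2, P(n,n) ≤ ⌊3n/2⌋. -/
/-!
For permutations of `[n]` with `n ≥ 3`, being `n`-neighbor separated means that the two ends of
one permutation are adjacent in the other. Fix an element `v` and the members of the family that
have `v` as an end. For any two of them, the other end of one is the neighbour of `v` in the
other; and their other ends are distinct, since otherwise the two ends of one of them would be
adjacent in it. Orienting each pair accordingly gives a tournament in which every vertex has
out-degree at most one, so at most three permutations have `v` as an end. As every permutation
has two ends, double counting gives `2 |F| ≤ 3 n`.
-/

open Finset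

theorem Finset.card_le_three_of_tournament_s14 {α : Type*} (S : Finset α) (r : α → α → Prop)
    (htotal : (S : Set α).Pairwise fun a b => r a b ∨ r b a)
    (hout : ∀ a ∈ S, {b | b ∈ S ∧ r a b}.Subsingleton) :
    #S ≤ 3 := by
  classical
  set R := S.offDiag.filter fun p => r p.1 p.2
  have hR : #R ≤ #S := by
    refine card_le_card_of_injOn Prod.fst (fun p hp => (mem_offDiag.1 (mem_filter.1 hp).1).1) ?_
    intro p hp q hq hpq
    simp only [coe_filter, mem_offDiag, Set.mem_ofPred_eq, R] at hp hq
    have h2 : p.2 = q.2 := hout p.1 hp.1.1 ⟨hp.1.2.1, hp.2⟩ ⟨hq.1.2.1, hpq ▸ hq.2⟩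
    exact Prod.ext hpq h2
  have hcover : S.offDiag ⊆ R ∪ R.image Prod.swap := by
    intro p hp
    have hp' := mem_offDiag.1 hp
    rcases htotal hp'.1 hp'.2.1 hp'.2.2 with h | h
    · exact mem_union_left _ (mem_filter.2 ⟨hp, h⟩)
    · refine mem_union_right _ (mem_image.2 ⟨p.swap, mem_filter.2 ⟨?_, h⟩, p.swap_swap⟩)
      exact mem_offDiag.2 ⟨hp'.2.1, hp'.1, Ne.symm hp'.2.2⟩
  have hoff : #S * #S - #S ≤ 2 * #S := by
    calc #S * #S - #S = #S.offDiag := S.offDiag_card.symm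
      _ ≤ #R + #(R.image Prod.swap) := (card_le_card hcover).trans (card_union_le _ _)
      _ ≤ 2 * #S := by linarith [card_image_le (s := R) (f := Prod.swap)]
  by_contra! h
  have := Nat.mul_le_mul_right #S h
  omega

namespace Equiv.Perm

variable {n : ℕ}

def AdjIn (π : Perm (Fin n)) (x y : Fin n) : Prop :=
  ((π.symm x : ℤ) - (π.symm y : ℤ)).natAbs = 1

theorem AdjIn.symm {π : Perm (Fin n)} {x y : Fin n} (h : π.AdjIn x y) : π.AdjIn y x := by
  unfold AdjIn at *; omega

def IsEnd (π : Perm (Fin (n + 1))) (v : Fin (n + 1)) : Prop :=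
  π.symm v = 0 ∨ π.symm v = Fin.last n

instance (π : Perm (Fin (n + 1))) : DecidablePred π.IsEnd :=
  fun _ => inferInstanceAs (Decidable (_ ∨ _))

def otherEnd (π : Perm (Fin (n + 1))) (v : Fin (n + 1)) : Fin (n + 1) :=
  if π.symm v = 0 then π (Fin.last n) else π 0

theorem symm_otherEnd_of_isEnd {π : Perm (Fin (n + 1))} {v : Fin (n + 1)} (hv : π.IsEnd v) :
    (π.symm v = 0 ∧ π.symm (π.otherEnd v) = Fin.last n) ∨
      (π.symm v = Fin.last n ∧ π.symm (π.otherEnd v) = 0) := by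
  unfold otherEnd
  split_ifs with h
  · simp [h]
  · simp [hv.resolve_left h]

theorem not_adjIn_otherEnd (hn : 2 ≤ n) {π : Perm (Fin (n + 1))} {v : Fin (n + 1)}
    (hv : π.IsEnd v) : ¬ π.AdjIn v (π.otherEnd v) := by
  unfold AdjIn
  rcases symm_otherEnd_of_isEnd hv with ⟨h₁, h₂⟩ | ⟨h₁, h₂⟩ <;> simp [h₁, h₂] <;> omega

theorem eq_of_adjIn_of_adjIn {π : Perm (Fin (n + 1))} {v y z : Fin (n + 1)} (hv : π.IsEnd v)
    (hy : π.AdjIn v y) (hz : π.AdjIn v z) : y = z := by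
  unfold AdjIn at hy hz
  have hy' := Fin.is_le (π.symm y)
  have hz' := Fin.is_le (π.symm z)
  have : π.symm y = π.symm z := by
    rcases hv with h | h <;> rw [h] at hy hz <;> simp at hy hz <;> ext <;> omega
  simpa using this

theorem eq_and_eq_otherEnd_of_natAbs_eq {σ : Perm (Fin (n + 1))} {v x y : Fin (n + 1)}
    (hv : σ.IsEnd v) (h : ((σ.symm x : ℤ) - (σ.symm y : ℤ)).natAbs = n) :
    (x = v ∧ y = σ.otherEnd v) ∨ (x = σ.otherEnd v ∧ y = v) := by
  have hx := Fin.is_le (σ.symm x)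
  have hy := Fin.is_le (σ.symm y)
  simp only [← σ.symm.injective.eq_iff (a := x), ← σ.symm.injective.eq_iff (a := y), Fin.ext_iff]
  rcases symm_otherEnd_of_isEnd hv with ⟨h₁, h₂⟩ | ⟨h₁, h₂⟩ <;>
    simp only [h₁, h₂, Fin.val_zero, Fin.val_last] <;> omega

end Equiv.Perm

namespace NeighborSep

open Equiv Perm

variable {n : ℕ} {π σ : Perm (Fin (n + 1))} {v : Fin (n + 1)}

theorem adjIn_otherEnd (h : NeighborSep (n + 1) (n + 1) π σ) (hπ : π.IsEnd v) (hσ : σ.IsEnd v) :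
    π.AdjIn v (σ.otherEnd v) ∨ σ.AdjIn v (π.otherEnd v) := by
  obtain ⟨x, y, ⟨hadj, hend⟩ | ⟨hadj, hend⟩⟩ := h
  · left
    rcases eq_and_eq_otherEnd_of_natAbs_eq hσ hend with ⟨rfl, rfl⟩ | ⟨rfl, rfl⟩
    exacts [hadj, AdjIn.symm hadj]
  · right
    rcases eq_and_eq_otherEnd_of_natAbs_eq hπ hend with ⟨rfl, rfl⟩ | ⟨rfl, rfl⟩
    exacts [hadj, AdjIn.symm hadj]

theorem otherEnd_ne (hn : 2 ≤ n) (h : NeighborSep (n + 1) (n + 1) π σ) (hπ : π.IsEnd v)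
    (hσ : σ.IsEnd v) : π.otherEnd v ≠ σ.otherEnd v := by
  intro heq
  rcases h.adjIn_otherEnd hπ hσ with hadj | hadj
  · exact not_adjIn_otherEnd hn hπ (heq ▸ hadj)
  · exact not_adjIn_otherEnd hn hσ (heq ▸ hadj)

end NeighborSep

open Equiv Perm

theorem card_filter_isEnd_le_three {n : ℕ} (hn : 2 ≤ n) {F : Finset (Perm (Fin (n + 1)))}
    (hF : (F : Set (Perm (Fin (n + 1)))).Pairwise (NeighborSep (n + 1) (n + 1)))
    (v : Fin (n + 1)) : #(F.filter (·.IsEnd v)) ≤ 3 := by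
  refine card_le_three_of_tournament_s14 _ (fun π σ => π.AdjIn v (σ.otherEnd v)) ?_ ?_
  · intro π hπ σ hσ hne
    simp only [coe_filter] at hπ hσ
    exact (hF hπ.1 hσ.1 hne).adjIn_otherEnd hπ.2 hσ.2
  · intro π hπ σ ⟨hσ, hπσ⟩ τ ⟨hτ, hπτ⟩
    simp only [mem_filter] at hπ hσ hτ
    by_contra hne
    exact (hF hσ.1 hτ.1 hne).otherEnd_ne hn hσ.2 hτ.2 (eq_of_adjIn_of_adjIn hπ.2 hπσ hπτ)

theorem two_mul_card_le_of_pairwise_neighborSep {n : ℕ} (hn : 2 ≤ n)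
    {F : Finset (Perm (Fin (n + 1)))}
    (hF : (F : Set (Perm (Fin (n + 1)))).Pairwise (NeighborSep (n + 1) (n + 1))) :
    2 * #F ≤ 3 * (n + 1) := by
  have hends : ∀ π ∈ F, 2 ≤ #((univ : Finset (Fin (n + 1))).bipartiteAbove IsEnd π) := by
    intro π _
    have hsub : {π 0, π (Fin.last n)} ⊆ univ.bipartiteAbove IsEnd π := by
      simp [insert_subset_iff, IsEnd]
    have hne : π 0 ≠ π (Fin.last n) := by
      simpa [Fin.ext_iff] using (by omega : 0 ≠ n)
    simpa [card_pair hne] using card_le_card hsub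
  have := card_nsmul_le_card_nsmul (t := univ) IsEnd hends
    fun v _ => card_filter_isEnd_le_three hn hF v
  simpa [mul_comm] using this

theorem permP_n_n_upper (n : ℕ) (hn : 2 ≤ n) :
    permP n n ≤ 3 * n / 2 := by
  apply csSup_le'
  rintro _ ⟨F, hF, rfl⟩
  obtain rfl | hn3 := hn.eq_or_lt
  · have : #F ≤ 2 := by simpa [Fintype.card_perm] using card_le_univ F
    omega
  · obtain ⟨m, rfl⟩ : ∃ m, n = m + 1 := ⟨n - 1, by omega⟩
    have := two_mul_card_le_of_pairwise_neighborSep (by omega) hF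
    omega
end

section
/- (Bollobás) Let a, b ≥ 1 and let (A₁,B₁), …, (A_m,B_m) be pairs of finite sets with |A_i| = a and |B_i| = b for every i, such that A_i ∩ B_j = ∅ if and only if i = j. Then m ≤ binom(a+b, a). -/
/-!
Bollobás's inequality `∑ i, 1 / (|Aᵢ| + |Bᵢ|).choose |Aᵢ| ≤ 1` is proved by induction on a ground
set `X` containing all the sets. For `x ∈ X`, the pairs `(Aᵢ, Bᵢ \ {x})` with `x ∉ Aᵢ` satisfy the
hypothesis inside `X \ {x}`. Summing these `|X|` instances over `x`, a pair with `|Aᵢ| = a` and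
`|Bᵢ| = b ≥ 1` contributes `(|X| - a - b) / (a + b).choose a + b / (a + b - 1).choose a`, which is
exactly `|X| / (a + b).choose a`. A pair with `Bᵢ = ∅` is the only pair of the family.
-/

open Finset

theorem Nat.add_mul_choose_add_sub_one {a b : ℕ} (hb : 0 < b) :
    (a + b) * (a + (b - 1)).choose a = b * (a + b).choose a := by
  obtain ⟨c, rfl⟩ := Nat.exists_eq_add_of_lt hb
  have := Nat.choose_mul_succ_eq (a + c) a
  rw [show a + c + 1 - a = c + 1 by omega] at this
  simp only [zero_add, Nat.add_sub_cancel, ← add_assoc]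
  linarith

section

variable {α ι : Type*}

theorem Finset.eq_singleton_of_forall_disjoint_iff {s : Finset ι} {A B : ι → Finset α}
    (hAB : ∀ i ∈ s, ∀ j ∈ s, Disjoint (A i) (B j) ↔ i = j) {i : ι} (hi : i ∈ s)
    (hBi : B i = ∅) : s = {i} :=
  eq_singleton_iff_unique_mem.2 ⟨hi, fun j hj => (hAB j hj i hi).1 (hBi ▸ disjoint_empty_right _)⟩

variable [DecidableEq α]

theorem Finset.sum_sdiff_inv_choose_card_erase {A B X : Finset α} (hA : A ⊆ X) (hB : B ⊆ X)
    (hAB : Disjoint A B) (hB₀ : B.Nonempty) :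
    ∑ x ∈ X \ A, ((#A + #(B.erase x)).choose #A : ℚ)⁻¹ = #X * ((#A + #B).choose #A : ℚ)⁻¹ := by
  have hBX : B ⊆ X \ A := subset_sdiff.2 ⟨hB, hAB.symm⟩
  have off_B : ∀ x ∈ (X \ A) \ B, ((#A + #(B.erase x)).choose #A : ℚ)⁻¹
      = ((#A + #B).choose #A : ℚ)⁻¹ := fun x hx => by rw [erase_eq_of_notMem (mem_sdiff.1 hx).2]
  have on_B : ∀ x ∈ B, ((#A + #(B.erase x)).choose #A : ℚ)⁻¹
      = ((#A + (#B - 1)).choose #A : ℚ)⁻¹ := fun x hx => by rw [card_erase_of_mem hx]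
  rw [← sum_sdiff hBX, sum_congr rfl off_B, sum_congr rfl on_B, sum_const, sum_const,
    nsmul_eq_mul, nsmul_eq_mul]
  have hcard : #((X \ A) \ B) + #B + #A = #X := by
    rw [card_sdiff_add_card_eq_card hBX, card_sdiff_add_card_eq_card hA]
  have key := congrArg (Nat.cast (R := ℚ)) (Nat.add_mul_choose_add_sub_one (a := #A) hB₀.card_pos)
  have hC : ((#A + #B).choose #A : ℚ) ≠ 0 :=
    Nat.cast_ne_zero.2 (Nat.choose_pos (Nat.le_add_right _ _)).ne'
  have hC' : ((#A + (#B - 1)).choose #A : ℚ) ≠ 0 :=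
    Nat.cast_ne_zero.2 (Nat.choose_pos (Nat.le_add_right _ _)).ne'
  rw [← hcard]
  field_simp
  push_cast at key ⊢
  linear_combination -key

theorem Finset.sum_inv_choose_le_one_of_subset (X : Finset α) {s : Finset ι} {A B : ι → Finset α}
    (hA : ∀ i ∈ s, A i ⊆ X) (hB : ∀ i ∈ s, B i ⊆ X)
    (hAB : ∀ i ∈ s, ∀ j ∈ s, Disjoint (A i) (B j) ↔ i = j) :
    ∑ i ∈ s, ((#(A i) + #(B i)).choose #(A i) : ℚ)⁻¹ ≤ 1 := by
  induction X using Finset.strongInduction generalizing s B with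
  | H X ih =>
  by_cases hB₀ : ∃ i ∈ s, B i = ∅
  · obtain ⟨i, hi, hBi⟩ := hB₀
    rw [eq_singleton_of_forall_disjoint_iff hAB hi hBi, sum_singleton, hBi]
    simp
  push Not at hB₀
  obtain rfl | ⟨i₀, hi₀⟩ := s.eq_empty_or_nonempty
  · simp
  have hX : 0 < #X := card_pos.2 ((hB₀ i₀ hi₀).mono (hB i₀ hi₀))
  have h_erase : ∀ x ∈ X, ∑ i ∈ s with x ∉ A i,
      ((#(A i) + #((B i).erase x)).choose #(A i) : ℚ)⁻¹ ≤ 1 := by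
    intro x hx
    refine ih _ (erase_ssubset hx) (fun i hi => ?_) (fun i hi => ?_) (fun i hi j hj => ?_)
    · rw [mem_filter] at hi
      exact subset_erase.2 ⟨hA i hi.1, hi.2⟩
    · exact erase_subset_erase x (hB i (mem_filter.1 hi).1)
    · rw [mem_filter] at hi hj
      rw [← disjoint_erase_comm, erase_eq_of_notMem hi.2]
      exact hAB i hi.1 j hj.1
  refine le_of_mul_le_mul_left ?_ (Nat.cast_pos.2 hX : (0 : ℚ) < #X)
  calc (#X : ℚ) * ∑ i ∈ s, ((#(A i) + #(B i)).choose #(A i) : ℚ)⁻¹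
      = ∑ i ∈ s, ∑ x ∈ X \ A i, ((#(A i) + #((B i).erase x)).choose #(A i) : ℚ)⁻¹ := by
        rw [mul_sum]
        refine sum_congr rfl fun i hi => ?_
        rw [sum_sdiff_inv_choose_card_erase (hA i hi) (hB i hi) ((hAB i hi i hi).2 rfl)
          (hB₀ i hi)]
    _ = ∑ x ∈ X, ∑ i ∈ s with x ∉ A i, ((#(A i) + #((B i).erase x)).choose #(A i) : ℚ)⁻¹ :=
        sum_comm' fun i x => by simp only [mem_sdiff, mem_filter]; tauto
    _ ≤ ∑ x ∈ X, 1 := sum_le_sum h_erase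
    _ = #X * 1 := by simp

theorem Finset.sum_inv_choose_le_one {s : Finset ι} {A B : ι → Finset α}
    (hAB : ∀ i ∈ s, ∀ j ∈ s, Disjoint (A i) (B j) ↔ i = j) :
    ∑ i ∈ s, ((#(A i) + #(B i)).choose #(A i) : ℚ)⁻¹ ≤ 1 :=
  sum_inv_choose_le_one_of_subset (s.biUnion fun i => A i ∪ B i)
    (fun _ hi => subset_union_left.trans (subset_biUnion_of_mem (fun i => A i ∪ B i) hi))
    (fun _ hi => subset_union_right.trans (subset_biUnion_of_mem (fun i => A i ∪ B i) hi)) hAB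

end

theorem bollobas_set_pairs_general {α : Type*} [DecidableEq α] (a b m : ℕ)
    (A B : Fin m → Finset α)
    (hA : ∀ i, (A i).card = a) (hB : ∀ i, (B i).card = b)
    (hcross : ∀ i j, A i ∩ B j = ∅ ↔ i = j) :
    m ≤ (a + b).choose a := by
  have hsum := sum_inv_choose_le_one (s := univ) fun i _ j _ =>
    disjoint_iff_inter_eq_empty.trans (hcross i j)
  simp only [hA, hB, sum_const, card_univ, Fintype.card_fin, nsmul_eq_mul] at hsum
  have hC : (0 : ℚ) < (a + b).choose a := Nat.cast_pos.2 (Nat.choose_pos (Nat.le_add_right _ _))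
  rw [← div_eq_mul_inv, div_le_one hC] at hsum
  exact_mod_cast hsum

theorem bollobas_set_pairs {α : Type*} [DecidableEq α] (a b m : ℕ)
    (ha : 1 ≤ a) (hb : 1 ≤ b) (A B : Fin m → Finset α)
    (hA : ∀ i, (A i).card = a) (hB : ∀ i, (B i).card = b)
    (hcross : ∀ i j, A i ∩ B j = ∅ ↔ i = j) :
    m ≤ (a + b).choose a :=
  bollobas_set_pairs_general a b m A B hA hB hcross
end

section
/- (Tuza) Let a, b ≥ 1 and let (A₁,B₁), …, (A_m,B_m) be pairs of finite sets with |A_i| = a, |B_i| = b and A_i ∩ B_i = ∅ for every i, such that for every i ≠ j at least one of A_i ∩ B_j ≠ ∅ or A_j ∩ B_i ≠ ∅ holds. Then m ≤ (a+b)^{a+b} / (a^a · b^b). -/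
/-!
Put every point of the ground set into a random set `R` independently with probability
`p = a / (a + b)`. The events `A i ⊆ R ∧ B i ∩ R = ∅` have probability `p ^ a * (1 - p) ^ b`
each, and they are pairwise disjoint because the family is weakly cross-intersecting, so
`m * p ^ a * (1 - p) ^ b ≤ 1`. Probabilities are written as weighted sums over the powerset
of the ground set.
-/

open Finset

structure IsWeaklyCrossIntersecting {ι α : Type*} [DecidableEq α] (A B : ι → Finset α) :
    Prop where
  disjoint : ∀ i, Disjoint (A i) (B i)
  cross : Pairwise fun i j => (A i ∩ B j).Nonempty ∨ (A j ∩ B i).Nonempty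

section WeightedSubsets

variable {α K : Type*} [DecidableEq α] [CommSemiring K]

theorem sum_powerset_filter_subset_disjoint_pow_mul_pow {p q : K} (hpq : p + q = 1)
    {X A B : Finset α} (hA : A ⊆ X) (hB : B ⊆ X) (hAB : Disjoint A B) :
    ∑ R ∈ X.powerset with A ⊆ R ∧ Disjoint B R, p ^ #R * q ^ (#X - #R) = p ^ #A * q ^ #B := by
  set Y := X \ (A ∪ B)
  have hfilter : {R ∈ X.powerset | A ⊆ R ∧ Disjoint B R} = Y.powerset.image (A ∪ ·) := by
    ext R
    simp only [mem_filter, mem_powerset, mem_image, Y]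
    constructor
    · rintro ⟨hRX, hAR, hBR⟩
      refine ⟨R \ A, ?_, union_sdiff_of_subset hAR⟩
      intro x hx
      simp only [mem_sdiff, mem_union] at hx ⊢
      exact ⟨hRX hx.1, fun h => h.elim hx.2 (disjoint_right.1 hBR hx.1)⟩
    · rintro ⟨T, hTY, rfl⟩
      refine ⟨union_subset hA (hTY.trans sdiff_subset), subset_union_left,
        disjoint_union_right.2 ⟨hAB.symm, ?_⟩⟩
      exact (disjoint_sdiff_self_right.mono_left subset_union_right).mono_right hTY
  have hdisjA {T} (hT : T ∈ Y.powerset) : Disjoint A T :=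
    (disjoint_sdiff_self_right.mono_left subset_union_left).mono_right (mem_powerset.1 hT)
  have hinj : Set.InjOn (A ∪ ·) Y.powerset := fun T hT T' hT' hTT' => by
    rw [← union_sdiff_cancel_left (hdisjA hT), ← union_sdiff_cancel_left (hdisjA hT')]
    exact congrArg (· \ A) hTT'
  have hAB_card : #A + #B ≤ #X := by
    rw [← card_union_of_disjoint hAB]; exact card_le_card (union_subset hA hB)
  have hY : #Y = #X - (#A + #B) := by
    rw [card_sdiff_of_subset (union_subset hA hB), card_union_of_disjoint hAB]
  rw [hfilter, sum_image hinj]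
  calc ∑ T ∈ Y.powerset, p ^ #(A ∪ T) * q ^ (#X - #(A ∪ T))
      = ∑ T ∈ Y.powerset, p ^ #A * q ^ #B * (p ^ #T * q ^ (#Y - #T)) := by
        refine sum_congr rfl fun T hT => ?_
        have hTY : #T ≤ #Y := card_le_card (mem_powerset.1 hT)
        rw [card_union_of_disjoint (hdisjA hT),
          show #X - (#A + #T) = #B + (#Y - #T) by omega, pow_add, pow_add]
        ring
    _ = p ^ #A * q ^ #B := by rw [← mul_sum, sum_pow_mul_eq_add_pow, hpq, one_pow, mul_one]

end WeightedSubsets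

namespace IsWeaklyCrossIntersecting

variable {ι α K : Type*} [Fintype ι] [DecidableEq α]
  [CommSemiring K] [PartialOrder K] [IsOrderedRing K]

theorem sum_pow_card_mul_pow_card_le_one {A B : ι → Finset α}
    (h : IsWeaklyCrossIntersecting A B) {p q : K} (hp : 0 ≤ p) (hq : 0 ≤ q) (hpq : p + q = 1) :
    ∑ i, p ^ #(A i) * q ^ #(B i) ≤ 1 := by
  set X := univ.biUnion fun i => A i ∪ B i
  have hX i : A i ∪ B i ⊆ X := subset_biUnion_of_mem (fun i => A i ∪ B i) (mem_univ i)
  set E : ι → Finset (Finset α) := fun i => {R ∈ X.powerset | A i ⊆ R ∧ Disjoint (B i) R}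
  have hE : Set.PairwiseDisjoint ↑(univ : Finset ι) E := by
    intro i _ j _ hij
    refine disjoint_left.2 fun R hRi hRj => ?_
    simp only [E, mem_filter] at hRi hRj
    rcases h.cross hij with ⟨x, hx⟩ | ⟨x, hx⟩ <;> rw [mem_inter] at hx
    · exact disjoint_left.1 hRj.2.2 hx.2 (hRi.2.1 hx.1)
    · exact disjoint_left.1 hRi.2.2 hx.2 (hRj.2.1 hx.1)
  calc ∑ i, p ^ #(A i) * q ^ #(B i)
      = ∑ i, ∑ R ∈ E i, p ^ #R * q ^ (#X - #R) :=
        sum_congr rfl fun i _ => (sum_powerset_filter_subset_disjoint_pow_mul_pow hpq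
          (subset_union_left.trans (hX i)) (subset_union_right.trans (hX i)) (h.disjoint i)).symm
    _ = ∑ R ∈ univ.biUnion E, p ^ #R * q ^ (#X - #R) := (sum_biUnion hE).symm
    _ ≤ ∑ R ∈ X.powerset, p ^ #R * q ^ (#X - #R) :=
        sum_le_sum_of_subset_of_nonneg (biUnion_subset.2 fun i _ => filter_subset _ _)
          fun _ _ _ => by positivity
    _ = 1 := by rw [sum_pow_mul_eq_add_pow, hpq, one_pow]

end IsWeaklyCrossIntersecting

-- Also true for `a = b = 0`, where both sides are `1` because `0 / 0 = 0` and `0 ^ 0 = 1`.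
theorem div_add_pow_mul_one_sub_div_add_pow (a b : ℕ) :
    ((a : ℝ) / (a + b)) ^ a * (1 - a / (a + b)) ^ b = a ^ a * b ^ b / (a + b) ^ (a + b) := by
  rcases Nat.eq_zero_or_pos (a + b) with hab | hab
  · obtain ⟨rfl, rfl⟩ : a = 0 ∧ b = 0 := by omega
    simp
  have hab' : (a + b : ℝ) ≠ 0 := by exact_mod_cast hab.ne'
  rw [one_sub_div hab', add_sub_cancel_left, div_pow, div_pow, pow_add]
  field_simp

theorem tuza_weakly_cross_intersecting_general {α : Type*} [DecidableEq α] (a b m : ℕ)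
    (A B : Fin m → Finset α)
    (hA : ∀ i, (A i).card = a) (hB : ∀ i, (B i).card = b)
    (hdisj : ∀ i, A i ∩ B i = ∅)
    (hweak : ∀ i j, i ≠ j → (A i ∩ B j).Nonempty ∨ (A j ∩ B i).Nonempty) :
    (m : ℝ) ≤ (a + b : ℝ) ^ (a + b) / ((a : ℝ) ^ a * (b : ℝ) ^ b) := by
  have hfamily : IsWeaklyCrossIntersecting A B :=
    ⟨fun i => disjoint_iff_inter_eq_empty.2 (hdisj i), fun i j => hweak i j⟩
  set p : ℝ := a / (a + b)
  have hp : p ≤ 1 := div_le_one_of_le₀ (by simp) (by positivity)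
  have hsum := hfamily.sum_pow_card_mul_pow_card_le_one (by positivity) (sub_nonneg.2 hp)
    (add_sub_cancel p 1)
  simp only [hA, hB, sum_const, card_univ, Fintype.card_fin, nsmul_eq_mul] at hsum
  have hnum : (0 : ℝ) < a ^ a * b ^ b := by exact_mod_cast mul_pos a.pow_self_pos b.pow_self_pos
  have hden : (0 : ℝ) < (a + b) ^ (a + b) := by exact_mod_cast (a + b).pow_self_pos
  rw [div_add_pow_mul_one_sub_div_add_pow, mul_div_assoc', div_le_one hden] at hsum
  rwa [le_div_iff₀ hnum]

theorem tuza_weakly_cross_intersecting {α : Type*} [DecidableEq α] (a b m : ℕ)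
    (ha : 1 ≤ a) (hb : 1 ≤ b) (A B : Fin m → Finset α)
    (hA : ∀ i, (A i).card = a) (hB : ∀ i, (B i).card = b)
    (hdisj : ∀ i, A i ∩ B i = ∅)
    (hweak : ∀ i j, i ≠ j → (A i ∩ B j).Nonempty ∨ (A j ∩ B i).Nonempty) :
    (m : ℝ) ≤ (a + b : ℝ) ^ (a + b) / ((a : ℝ) ^ a * (b : ℝ) ^ b) :=
  tuza_weakly_cross_intersecting_general a b m A B hA hB hdisj hweak
end
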